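/- arXiv:2407.10122 — 9 statements merged into one kernel-verified Lean document; each statement's English description precedes it below -/
import Mathlib

section
/- Let n, N ≥ 1 and let ρ_0, …, ρ_{n+N−1} be p×p complex matrices with operator norm ‖ρ_k‖ < 1. Let 𝔄_k(z) be the frames built from the full sequence, and let 𝔄̃_k(z) be built from the shifted sequence ρ̃_k := ρ_{k+n} (0 ≤ k < N). Fix z ∈ ℂ, z ≠ −2i, and p×p matrices R, Q such that 𝔄̃_{21}(N,z)R + 𝔄̃_{22}(N,z)Q is invertible; set φ̃ := i(𝔄̃_{11}(N,z)R + 𝔄̃_{12}(N,z)Q)(𝔄̃_{21}(N,z)R + 𝔄̃_{22}(N,z)Q)^{−1}. If moreover 𝔄_{21}(n,z)(−iφ̃) + 𝔄_{22}(n,z) is invertible, then 𝔄_{21}(n+N,z)R + 𝔄_{22}(n+N,z)Q is invertible and the Khrushchev-type formula holds: i(𝔄_{11}(n,z)(−iφ̃) + 𝔄_{12}(n,z))(𝔄_{21}(n,z)(−iφ̃) + 𝔄_{22}(n,z))^{−1} = i(𝔄_{11}(n+N,z)R + 𝔄_{12}(n+N,z)Q)(𝔄_{21}(n+N,z)R +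 𝔄_{22}(n+N,z)Q)^{−1}. -/
open Matrix
open scoped ComplexOrder

noncomputable section

/-- `X^{-1/2}` for a positive semidefinite matrix `X` (junk value `0` otherwise). -/
def invSqrt {p : ℕ} (X : Matrix (Fin p) (Fin p) ℂ) : Matrix (Fin p) (Fin p) ℂ :=
  open scoped Classical in
  if h : X.PosSemidef then
    ((h.1.eigenvectorUnitary : Matrix (Fin p) (Fin p) ℂ) *
      diagonal ((↑) ∘ (√·) ∘ h.1.eigenvalues) *
      (star h.1.eigenvectorUnitary : Matrix (Fin p) (Fin p) ℂ))⁻¹ else 0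

/-- `j = diag{I_p, -I_p}`. -/
def jmat (p : ℕ) : Matrix (Fin p ⊕ Fin p) (Fin p ⊕ Fin p) ℂ :=
  Matrix.fromBlocks 1 0 0 (-1)

/-- `J = [[0, I_p],[I_p, 0]]`. -/
def Jmat (p : ℕ) : Matrix (Fin p ⊕ Fin p) (Fin p ⊕ Fin p) ℂ :=
  Matrix.fromBlocks 0 1 1 0

/-- `K = (1/√2) [[I_p, -I_p],[I_p, I_p]]`. -/
def Kmat (p : ℕ) : Matrix (Fin p ⊕ Fin p) (Fin p ⊕ Fin p) ℂ :=
  ((Real.sqrt 2 : ℂ))⁻¹ • Matrix.fromBlocks 1 (-1) 1 1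

/-- The Halmos extension `C = D F` of a strictly contractive `p × p` matrix `ρ`. -/
def halmos {p : ℕ} (ρ : Matrix (Fin p) (Fin p) ℂ) :
    Matrix (Fin p ⊕ Fin p) (Fin p ⊕ Fin p) ℂ :=
  Matrix.fromBlocks (invSqrt (1 - ρ * ρᴴ)) 0 0 (invSqrt (1 - ρᴴ * ρ)) *
    Matrix.fromBlocks 1 ρ ρᴴ 1

/-- The fundamental solution `W_k(z)` of the discrete Dirac system built from the
Verblunsky-type coefficients `ρ_0, ρ_1, …` : `W_0(z) = I`,
`W_{k+1}(z) = (I + i z j C_k) W_k(z)`. -/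
def Wsol {p : ℕ} (ρ : ℕ → Matrix (Fin p) (Fin p) ℂ) :
    ℕ → ℂ → Matrix (Fin p ⊕ Fin p) (Fin p ⊕ Fin p) ℂ
  | 0, _ => 1
  | k + 1, z => (1 + (Complex.I * z) • (jmat p * halmos (ρ k))) * Wsol ρ k z

/-- The frame `𝔄_k(z) = (1 - (i/2) z)^{-k} · J j K · W_k(-conj(z)/2)^* · K^* j J`. -/
def frameA {p : ℕ} (ρ : ℕ → Matrix (Fin p) (Fin p) ℂ) (k : ℕ) (z : ℂ) :
    Matrix (Fin p ⊕ Fin p) (Fin p ⊕ Fin p) ℂ :=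
  ((1 - (Complex.I / 2) * z) ^ k)⁻¹ •
    (Jmat p * jmat p * Kmat p * (Wsol ρ k (-(starRingEnd ℂ z) / 2))ᴴ *
      (Kmat p)ᴴ * jmat p * Jmat p)

/-!
The frames are multiplicative: `W_{n+N} = W̃_N W_n`, and the conjugating matrices satisfy
`(K* j J)(J j K) = I`, so `𝔄_{n+N} = 𝔄_n 𝔄̃_N`. Hence `𝔄_{n+N}` sends the pair `(R, Q)` to the image
under `𝔄_n` of the pair `(U, V) := 𝔄̃_N (R, Q)`, and replacing `(U, V)` by `(U V⁻¹, I) = (-iφ̃, I)`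
changes neither the invertibility of the denominator nor the linear fractional transformation.
-/

section BlockAction

variable {l m n o p q r α : Type*} [Fintype l] [Fintype m] [Fintype p] [Fintype q]
  [NonUnitalSemiring α] (A : Matrix (n ⊕ o) (l ⊕ m) α) (B : Matrix (l ⊕ m) (p ⊕ q) α)
  (R : Matrix p r α) (Q : Matrix q r α)

lemma toBlocks₁₁_mul_add_toBlocks₁₂_mul :
    (A * B).toBlocks₁₁ * R + (A * B).toBlocks₁₂ * Q =
      A.toBlocks₁₁ * (B.toBlocks₁₁ * R + B.toBlocks₁₂ * Q) +
        A.toBlocks₁₂ * (B.toBlocks₂₁ * R + B.toBlocks₂₂ * Q) := by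
  rw [← fromBlocks_toBlocks A, ← fromBlocks_toBlocks B, fromBlocks_multiply]
  simp only [toBlocks_fromBlocks₁₁, toBlocks_fromBlocks₁₂, toBlocks_fromBlocks₂₁,
    toBlocks_fromBlocks₂₂, Matrix.add_mul, Matrix.mul_add, Matrix.mul_assoc]
  abel

lemma toBlocks₂₁_mul_add_toBlocks₂₂_mul :
    (A * B).toBlocks₂₁ * R + (A * B).toBlocks₂₂ * Q =
      A.toBlocks₂₁ * (B.toBlocks₁₁ * R + B.toBlocks₁₂ * Q) +
        A.toBlocks₂₂ * (B.toBlocks₂₁ * R + B.toBlocks₂₂ * Q) := by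
  rw [← fromBlocks_toBlocks A, ← fromBlocks_toBlocks B, fromBlocks_multiply]
  simp only [toBlocks_fromBlocks₁₁, toBlocks_fromBlocks₁₂, toBlocks_fromBlocks₂₁,
    toBlocks_fromBlocks₂₂, Matrix.add_mul, Matrix.mul_add, Matrix.mul_assoc]
  abel

end BlockAction

lemma mul_mul_inv_mul_of_isUnit {n α : Type*} [Fintype n] [DecidableEq n] [CommRing α]
    (X D V : Matrix n n α) (hV : IsUnit V) : X * V * (D * V)⁻¹ = X * D⁻¹ := by
  rw [Matrix.mul_inv_rev, Matrix.mul_assoc, Matrix.mul_nonsing_inv_cancel_left _ _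
    ((isUnit_iff_isUnit_det V).mp hV)]

lemma mul_add_mul_eq_of_isUnit {n α : Type*} [Fintype n] [DecidableEq n] [CommRing α]
    (a b U V : Matrix n n α) (hV : IsUnit V) : a * U + b * V = (a * (U * V⁻¹) + b) * V := by
  rw [Matrix.add_mul, Matrix.mul_assoc a, Matrix.nonsing_inv_mul_cancel_right _ _
    ((isUnit_iff_isUnit_det V).mp hV)]

lemma conj_mul_of_mul_eq_one {M : Type*} [Monoid M] {a b : M} (h : b * a = 1) (x y : M) :
    a * (x * y) * b = a * x * b * (a * y * b) := by
  calc a * (x * y) * b = a * x * (b * a) * y * b := by rw [h, mul_one]; simp only [mul_assoc]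
    _ = a * x * b * (a * y * b) := by simp only [mul_assoc]

lemma jmat_mul_self (p : ℕ) : jmat p * jmat p = 1 := by
  simp [jmat, fromBlocks_multiply, ← fromBlocks_one]

lemma Jmat_mul_self (p : ℕ) : Jmat p * Jmat p = 1 := by
  simp [Jmat, fromBlocks_multiply, ← fromBlocks_one]

lemma Kmat_conjTranspose_mul_self (p : ℕ) : (Kmat p)ᴴ * Kmat p = 1 := by
  have hc : ((Real.sqrt 2 : ℂ))⁻¹ * ((Real.sqrt 2 : ℂ))⁻¹ * 2 = 1 := by
    rw [← mul_inv, ← Complex.ofReal_mul, Real.mul_self_sqrt zero_le_two]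
    norm_num
  simp only [Kmat, conjTranspose_smul, fromBlocks_conjTranspose, smul_mul_smul_comm,
    fromBlocks_multiply]
  simp [← two_smul ℂ (1 : Matrix (Fin p) (Fin p) ℂ), ← fromBlocks_one, fromBlocks_smul,
    smul_smul, hc]

lemma Kmat_jmat_Jmat_mul_Jmat_jmat_Kmat (p : ℕ) :
    (Kmat p)ᴴ * jmat p * Jmat p * (Jmat p * jmat p * Kmat p) = 1 := by
  simp only [Matrix.mul_assoc]
  rw [← Matrix.mul_assoc (Jmat p) (Jmat p), Jmat_mul_self, Matrix.one_mul,
    ← Matrix.mul_assoc (jmat p) (jmat p), jmat_mul_self, Matrix.one_mul,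
    Kmat_conjTranspose_mul_self]

lemma Wsol_add {p : ℕ} (ρ : ℕ → Matrix (Fin p) (Fin p) ℂ) (n N : ℕ) (z : ℂ) :
    Wsol ρ (n + N) z = Wsol (fun k => ρ (k + n)) N z * Wsol ρ n z := by
  induction N with
  | zero => simp [Wsol]
  | succ N ih => rw [← add_assoc, Wsol, Wsol, ih, Matrix.mul_assoc, add_comm n N]

lemma frameA_add {p : ℕ} (ρ : ℕ → Matrix (Fin p) (Fin p) ℂ) (n N : ℕ) (z : ℂ) :
    frameA ρ (n + N) z = frameA ρ n z * frameA (fun k => ρ (k + n)) N z := by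
  have hconj : ∀ X, Jmat p * jmat p * Kmat p * X * (Kmat p)ᴴ * jmat p * Jmat p =
      Jmat p * jmat p * Kmat p * X * ((Kmat p)ᴴ * jmat p * Jmat p) := by
    intro X; simp only [Matrix.mul_assoc]
  rw [frameA, frameA, frameA, hconj, hconj, hconj, Wsol_add, conjTranspose_mul,
    conj_mul_of_mul_eq_one (Kmat_jmat_Jmat_mul_Jmat_jmat_Kmat p), pow_add, mul_inv,
    smul_mul_smul_comm]

theorem khrushchev_type_formula_general
    {p : ℕ} (n N : ℕ)
    (ρ : ℕ → Matrix (Fin p) (Fin p) ℂ)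
    (z : ℂ)
    (R Q : Matrix (Fin p) (Fin p) ℂ)
    (hRQ : IsUnit ((frameA (fun k => ρ (k + n)) N z).toBlocks₂₁ * R +
      (frameA (fun k => ρ (k + n)) N z).toBlocks₂₂ * Q))
    (φt : Matrix (Fin p) (Fin p) ℂ)
    (hφt : φt = Complex.I •
      (((frameA (fun k => ρ (k + n)) N z).toBlocks₁₁ * R +
          (frameA (fun k => ρ (k + n)) N z).toBlocks₁₂ * Q) *
        ((frameA (fun k => ρ (k + n)) N z).toBlocks₂₁ * R +
          (frameA (fun k => ρ (k + n)) N z).toBlocks₂₂ * Q)⁻¹))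
    (hden : IsUnit ((frameA ρ n z).toBlocks₂₁ * (-Complex.I • φt) +
      (frameA ρ n z).toBlocks₂₂)) :
    IsUnit ((frameA ρ (n + N) z).toBlocks₂₁ * R + (frameA ρ (n + N) z).toBlocks₂₂ * Q) ∧
    Complex.I •
      (((frameA ρ n z).toBlocks₁₁ * (-Complex.I • φt) + (frameA ρ n z).toBlocks₁₂) *
        ((frameA ρ n z).toBlocks₂₁ * (-Complex.I • φt) + (frameA ρ n z).toBlocks₂₂)⁻¹) =
    Complex.I •
      (((frameA ρ (n + N) z).toBlocks₁₁ * R + (frameA ρ (n + N) z).toBlocks₁₂ * Q) *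
        ((frameA ρ (n + N) z).toBlocks₂₁ * R + (frameA ρ (n + N) z).toBlocks₂₂ * Q)⁻¹) := by
  set A := frameA ρ n z
  set B := frameA (fun k => ρ (k + n)) N z
  set U := B.toBlocks₁₁ * R + B.toBlocks₁₂ * Q
  set V := B.toBlocks₂₁ * R + B.toBlocks₂₂ * Q
  have hφ : -Complex.I • φt = U * V⁻¹ := by
    rw [hφt, smul_smul, neg_mul, Complex.I_mul_I, neg_neg, one_smul]
  have hnum : (frameA ρ (n + N) z).toBlocks₁₁ * R + (frameA ρ (n + N) z).toBlocks₁₂ * Q =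
      (A.toBlocks₁₁ * (U * V⁻¹) + A.toBlocks₁₂) * V := by
    rw [frameA_add, toBlocks₁₁_mul_add_toBlocks₁₂_mul, mul_add_mul_eq_of_isUnit _ _ _ _ hRQ]
  have hdenom : (frameA ρ (n + N) z).toBlocks₂₁ * R + (frameA ρ (n + N) z).toBlocks₂₂ * Q =
      (A.toBlocks₂₁ * (U * V⁻¹) + A.toBlocks₂₂) * V := by
    rw [frameA_add, toBlocks₂₁_mul_add_toBlocks₂₂_mul, mul_add_mul_eq_of_isUnit _ _ _ _ hRQ]
  rw [hφ] at hden ⊢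
  rw [hnum, hdenom, mul_mul_inv_mul_of_isUnit _ _ _ hRQ]
  exact ⟨hden.mul hRQ, rfl⟩

/-- the Khrushchev-type formula: separation of the Verblunsky-type
coefficients in the linear fractional transformations generated by the frames. -/
theorem khrushchev_type_formula
    {p : ℕ} (hp : 1 ≤ p) (n N : ℕ) (hn : 1 ≤ n) (hN : 1 ≤ N)
    (ρ : ℕ → Matrix (Fin p) (Fin p) ℂ)
    (hρ : ∀ k < n + N, ‖Matrix.toEuclideanCLM (𝕜 := ℂ) (ρ k)‖ < 1)
    (z : ℂ) (hz : z ≠ -2 * Complex.I)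
    (R Q : Matrix (Fin p) (Fin p) ℂ)
    (hRQ : IsUnit ((frameA (fun k => ρ (k + n)) N z).toBlocks₂₁ * R +
      (frameA (fun k => ρ (k + n)) N z).toBlocks₂₂ * Q))
    (φt : Matrix (Fin p) (Fin p) ℂ)
    (hφt : φt = Complex.I •
      (((frameA (fun k => ρ (k + n)) N z).toBlocks₁₁ * R +
          (frameA (fun k => ρ (k + n)) N z).toBlocks₁₂ * Q) *
        ((frameA (fun k => ρ (k + n)) N z).toBlocks₂₁ * R +
          (frameA (fun k => ρ (k + n)) N z).toBlocks₂₂ * Q)⁻¹))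
    (hden : IsUnit ((frameA ρ n z).toBlocks₂₁ * (-Complex.I • φt) +
      (frameA ρ n z).toBlocks₂₂)) :
    IsUnit ((frameA ρ (n + N) z).toBlocks₂₁ * R + (frameA ρ (n + N) z).toBlocks₂₂ * Q) ∧
    Complex.I •
      (((frameA ρ n z).toBlocks₁₁ * (-Complex.I • φt) + (frameA ρ n z).toBlocks₁₂) *
        ((frameA ρ n z).toBlocks₂₁ * (-Complex.I • φt) + (frameA ρ n z).toBlocks₂₂)⁻¹) =
    Complex.I •
      (((frameA ρ (n + N) z).toBlocks₁₁ * R + (frameA ρ (n + N) z).toBlocks₁₂ * Q) *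
        ((frameA ρ (n + N) z).toBlocks₂₁ * R + (frameA ρ (n + N) z).toBlocks₂₂ * Q)⁻¹) :=
  khrushchev_type_formula_general n N ρ z R Q hRQ φt hφt hden

end
end

section
/- Let 𝔄 be a 2p×2p complex matrix with p×p blocks 𝔄_{ij} (i,j ∈ {1,2}) such that 𝔄*J𝔄 − J is positive semidefinite. Let R, Q be p×p complex matrices with R*Q + Q*R positive semidefinite, and suppose F := 𝔄_{21}R + 𝔄_{22}Q is invertible. Then the matrix φ := i(𝔄_{11}R + 𝔄_{12}Q)F^{−1} satisfies Im φ ≥ 0, i.e. (φ − φ*)/(2i) is positive semidefinite. -/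
open Matrix
open scoped ComplexOrder

/-!
For `v = [R; Q]` the form `vᴴ J v` is `Rᴴ Q + Qᴴ R`, and `J`-expansivity of `𝔄` says the form of
`𝔄 v = [E; F]` dominates that of `v`, so `Eᴴ F + Fᴴ E ≥ 0`. Conjugating by `F⁻¹` gives
`E F⁻¹ + (E F⁻¹)ᴴ ≥ 0`, which is twice the imaginary part of `φ = i E F⁻¹`.
-/

namespace Matrix

variable {m n R : Type*} [Fintype m]

theorem fromRows_conjTranspose_mul_fromBlocks_swap_mul [DecidableEq m] [Ring R] [StarRing R]
    (E F : Matrix m n R) :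
    (fromRows E F)ᴴ * (fromBlocks 0 1 1 0 : Matrix (m ⊕ m) (m ⊕ m) R) * fromRows E F =
      Eᴴ * F + Fᴴ * E := by
  rw [conjTranspose_fromRows_eq_fromCols_conjTranspose, fromCols_mul_fromBlocks,
    fromCols_mul_fromRows]
  simp [add_comm]

variable [CommRing R] [PartialOrder R] [StarRing R]

theorem PosSemidef.conjTranspose_mul_mul_of_sub_posSemidef [Fintype n] [StarOrderedRing R]
    {A J : Matrix m m R} (hA : (Aᴴ * J * A - J).PosSemidef) {v : Matrix m n R}
    (hv : (vᴴ * J * v).PosSemidef) :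
    ((A * v)ᴴ * J * (A * v)).PosSemidef := by
  have h := (hA.conjTranspose_mul_mul_same v).add hv
  rw [Matrix.mul_sub, Matrix.sub_mul, sub_add_cancel] at h
  rw [conjTranspose_mul]
  simpa only [Matrix.mul_assoc] using h

theorem PosSemidef.mul_inv_add_conjTranspose [DecidableEq m] {E F : Matrix m m R}
    (hEF : (Eᴴ * F + Fᴴ * E).PosSemidef) (hF : IsUnit F) : (E * F⁻¹ + (E * F⁻¹)ᴴ).PosSemidef := by
  have hFF : F * F⁻¹ = 1 := mul_nonsing_inv F ((isUnit_iff_isUnit_det F).mp hF)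
  have hFF' : (F⁻¹)ᴴ * Fᴴ = 1 := by rw [← conjTranspose_mul, hFF, conjTranspose_one]
  convert hEF.conjTranspose_mul_mul_same F⁻¹ using 1
  calc E * F⁻¹ + (E * F⁻¹)ᴴ = ((F⁻¹)ᴴ * Fᴴ) * E * F⁻¹ + (F⁻¹)ᴴ * Eᴴ * (F * F⁻¹) := by
        rw [hFF, hFF', conjTranspose_mul]; simp
    _ = _ := by noncomm_ring

end Matrix

theorem Matrix.inv_two_I_smul_I_smul_sub_conjTranspose {m : Type*} (X : Matrix m m ℂ) :
    (2 * Complex.I)⁻¹ • (Complex.I • X - (Complex.I • X)ᴴ) = (2 : ℂ)⁻¹ • (X + Xᴴ) := by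
  rw [conjTranspose_smul, Complex.star_def, Complex.conj_I, neg_smul, sub_neg_eq_add, ← smul_add,
    smul_smul]
  congr 1
  field_simp

theorem lft_of_expansive_frame_is_herglotz_general
    {p : ℕ}
    (𝔄 : Matrix (Fin p ⊕ Fin p) (Fin p ⊕ Fin p) ℂ)
    (h𝔄 : (𝔄ᴴ * Matrix.fromBlocks 0 1 1 0 * 𝔄 - Matrix.fromBlocks 0 1 1 0).PosSemidef)
    (R Q : Matrix (Fin p) (Fin p) ℂ)
    (hRQ : (Rᴴ * Q + Qᴴ * R).PosSemidef)
    (hF : IsUnit (𝔄.toBlocks₂₁ * R + 𝔄.toBlocks₂₂ * Q)) :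
    ((2 * Complex.I)⁻¹ •
      (Complex.I • ((𝔄.toBlocks₁₁ * R + 𝔄.toBlocks₁₂ * Q) *
          (𝔄.toBlocks₂₁ * R + 𝔄.toBlocks₂₂ * Q)⁻¹) -
        (Complex.I • ((𝔄.toBlocks₁₁ * R + 𝔄.toBlocks₁₂ * Q) *
          (𝔄.toBlocks₂₁ * R + 𝔄.toBlocks₂₂ * Q)⁻¹))ᴴ)).PosSemidef := by
  have h𝔄v : 𝔄 * fromRows R Q =
      fromRows (𝔄.toBlocks₁₁ * R + 𝔄.toBlocks₁₂ * Q) (𝔄.toBlocks₂₁ * R + 𝔄.toBlocks₂₂ * Q) := by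
    conv_lhs => rw [← fromBlocks_toBlocks 𝔄]
    exact fromBlocks_mul_fromRows ..
  have hv := fromRows_conjTranspose_mul_fromBlocks_swap_mul R Q ▸ hRQ
  have hEF := h𝔄.conjTranspose_mul_mul_of_sub_posSemidef hv
  rw [h𝔄v, fromRows_conjTranspose_mul_fromBlocks_swap_mul] at hEF
  rw [inv_two_I_smul_I_smul_sub_conjTranspose]
  exact (hEF.mul_inv_add_conjTranspose hF).smul (by norm_num [Complex.le_def])

/-- if `𝔄* J 𝔄 - J ≥ 0` and `(R, Q)` satisfies `R*Q + Q*R ≥ 0` with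
`F = 𝔄₂₁ R + 𝔄₂₂ Q` invertible, then `φ = i (𝔄₁₁ R + 𝔄₁₂ Q) F⁻¹` has `Im φ ≥ 0`. -/
theorem lft_of_expansive_frame_is_herglotz
    {p : ℕ} (hp : 1 ≤ p)
    (𝔄 : Matrix (Fin p ⊕ Fin p) (Fin p ⊕ Fin p) ℂ)
    (h𝔄 : (𝔄ᴴ * Matrix.fromBlocks 0 1 1 0 * 𝔄 - Matrix.fromBlocks 0 1 1 0).PosSemidef)
    (R Q : Matrix (Fin p) (Fin p) ℂ)
    (hRQ : (Rᴴ * Q + Qᴴ * R).PosSemidef)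
    (hF : IsUnit (𝔄.toBlocks₂₁ * R + 𝔄.toBlocks₂₂ * Q)) :
    ((2 * Complex.I)⁻¹ •
      (Complex.I • ((𝔄.toBlocks₁₁ * R + 𝔄.toBlocks₁₂ * Q) *
          (𝔄.toBlocks₂₁ * R + 𝔄.toBlocks₂₂ * Q)⁻¹) -
        (Complex.I • ((𝔄.toBlocks₁₁ * R + 𝔄.toBlocks₁₂ * Q) *
          (𝔄.toBlocks₂₁ * R + 𝔄.toBlocks₂₂ * Q)⁻¹))ᴴ)).PosSemidef :=
  lft_of_expansive_frame_is_herglotz_general 𝔄 h𝔄 R Q hRQ hF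
end

section
/- Let 𝔄 be a 2p×2p complex matrix with p×p blocks 𝔄_{ij} (i,j ∈ {1,2}) satisfying 𝔄*J𝔄 = J. Let R, Q be p×p complex matrices such that F := 𝔄_{21}R + 𝔄_{22}Q is invertible, and set φ := i(𝔄_{11}R + 𝔄_{12}Q)F^{−1}. Then φ − φ* = i(F^{−1})*(R*Q + Q*R)F^{−1}. -/
open Matrix

/-- if `𝔄* J 𝔄 = J` and `F = 𝔄₂₁ R + 𝔄₂₂ Q` is invertible, then
`φ = i (𝔄₁₁ R + 𝔄₁₂ Q) F⁻¹` satisfies `φ - φ* = i (F⁻¹)* (R*Q + Q*R) F⁻¹`. -/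
theorem lft_imaginary_part_formula_of_J_unitary_frame
    {p : ℕ} (hp : 1 ≤ p)
    (𝔄 : Matrix (Fin p ⊕ Fin p) (Fin p ⊕ Fin p) ℂ)
    (h𝔄 : 𝔄ᴴ * Matrix.fromBlocks 0 1 1 0 * 𝔄 = Matrix.fromBlocks 0 1 1 0)
    (R Q : Matrix (Fin p) (Fin p) ℂ)
    (hF : IsUnit (𝔄.toBlocks₂₁ * R + 𝔄.toBlocks₂₂ * Q)) :
    Complex.I • ((𝔄.toBlocks₁₁ * R + 𝔄.toBlocks₁₂ * Q) *
        (𝔄.toBlocks₂₁ * R + 𝔄.toBlocks₂₂ * Q)⁻¹) -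
      (Complex.I • ((𝔄.toBlocks₁₁ * R + 𝔄.toBlocks₁₂ * Q) *
        (𝔄.toBlocks₂₁ * R + 𝔄.toBlocks₂₂ * Q)⁻¹))ᴴ =
    Complex.I • (((𝔄.toBlocks₂₁ * R + 𝔄.toBlocks₂₂ * Q)⁻¹)ᴴ *
      (Rᴴ * Q + Qᴴ * R) * (𝔄.toBlocks₂₁ * R + 𝔄.toBlocks₂₂ * Q)⁻¹) := by
  set A := 𝔄.toBlocks₁₁ with hA
  set B := 𝔄.toBlocks₁₂ with hB
  set C := 𝔄.toBlocks₂₁ with hC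
  set D := 𝔄.toBlocks₂₂ with hD
  have h𝔄' : 𝔄 = Matrix.fromBlocks A B C D := (Matrix.fromBlocks_toBlocks 𝔄).symm
  rw [h𝔄', Matrix.fromBlocks_conjTranspose, Matrix.fromBlocks_multiply,
    Matrix.fromBlocks_multiply] at h𝔄
  simp only [Matrix.mul_zero, Matrix.zero_mul, Matrix.mul_one, Matrix.one_mul,
    zero_add, add_zero] at h𝔄
  have h11 : Cᴴ * A + Aᴴ * C = 0 := by simpa using congrArg Matrix.toBlocks₁₁ h𝔄
  have h12 : Cᴴ * B + Aᴴ * D = 1 := by simpa using congrArg Matrix.toBlocks₁₂ h𝔄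
  have h21 : Dᴴ * A + Bᴴ * C = 1 := by simpa using congrArg Matrix.toBlocks₂₁ h𝔄
  have h22 : Dᴴ * B + Bᴴ * D = 0 := by simpa using congrArg Matrix.toBlocks₂₂ h𝔄
  set G := A * R + B * Q with hG
  set F := C * R + D * Q with hFdef
  have key : Fᴴ * G + Gᴴ * F = Rᴴ * Q + Qᴴ * R := by
    have : Fᴴ * G + Gᴴ * F =
        Rᴴ * (Cᴴ * A + Aᴴ * C) * R + Rᴴ * (Cᴴ * B + Aᴴ * D) * Q
          + Qᴴ * (Dᴴ * A + Bᴴ * C) * R + Qᴴ * (Dᴴ * B + Bᴴ * D) * Q := by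
      simp only [hG, hFdef, Matrix.conjTranspose_add, Matrix.conjTranspose_mul]
      noncomm_ring
    rw [this, h11, h12, h21, h22]
    simp
  have hdet : IsUnit F.det := (Matrix.isUnit_iff_isUnit_det F).mp hF
  have hFinv : F * F⁻¹ = 1 := Matrix.mul_nonsing_inv F hdet
  have main : G * F⁻¹ + (F⁻¹)ᴴ * Gᴴ = (F⁻¹)ᴴ * (Rᴴ * Q + Qᴴ * R) * F⁻¹ := by
    rw [← key]
    have h1 : (F⁻¹)ᴴ * Fᴴ = 1 := by
      rw [← Matrix.conjTranspose_mul, hFinv, Matrix.conjTranspose_one]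
    have hFinv' : F⁻¹ * F = 1 := Matrix.nonsing_inv_mul F hdet
    calc G * F⁻¹ + (F⁻¹)ᴴ * Gᴴ
        = (F⁻¹)ᴴ * Fᴴ * (G * F⁻¹) + (F⁻¹)ᴴ * Gᴴ * (F * F⁻¹) := by
          rw [h1, hFinv, Matrix.one_mul, Matrix.mul_one]
      _ = (F⁻¹)ᴴ * (Fᴴ * G + Gᴴ * F) * F⁻¹ := by noncomm_ring
  have hsmul : (Complex.I • (G * F⁻¹))ᴴ = -(Complex.I • ((F⁻¹)ᴴ * Gᴴ)) := by
    rw [Matrix.conjTranspose_smul, Matrix.conjTranspose_mul]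
    simp [Complex.conj_I, neg_smul]
  rw [hsmul, sub_neg_eq_add, ← smul_add, main]
end

section
/- Let n ≥ 2, let ν be a positive measure on ℝ and W : ℝ → (p×p complex matrices) a measurable function with W(t) positive semidefinite ν-a.e. and ∫_ℝ (1 + |t|^{2n−2})‖W(t)‖ dν(t) < ∞. Let H_0, …, H_{2n−3} be p×p matrices with ∫_ℝ t^k W(t) dν(t) = H_k for 0 ≤ k ≤ 2n−3, and define φ(z) := ∫_ℝ (t − z)^{−1} W(t) dν(t) for z in the open upper half-plane. Then for every δ > 0 there exist constants C > 0 and r > 0 such that for all z with Im z ≥ δ|z| and |z| ≥ r one has ‖φ(z) + Σ_{k=0}^{2n−3} z^{−(k+1)} H_k‖ ≤ C |z|^{−(2n−1)}; that is, φ(z) = −Σ_{k=0}^{2n−3} z^{−(k+1)} H_k + O(z^{−(2n−1)}) as z tends non-tangentially to infinity in ℂ₊. -/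
open Matrix MeasureTheory Filter
open scoped ComplexOrder

/-!
Expanding the resolvent in powers of `1 / z` gives the exact identity
`(t - z)⁻¹ + ∑_{k<m} t ^ k / z ^ (k + 1) = (t / z) ^ m (t - z)⁻¹`, so after integrating against
`W`, the quantity `φ z + ∑_{k<m} z^{-(k+1)} H_k` is the integral of `(t / z) ^ m (t - z)⁻¹ W t`.
For real `t` we have `|t - z| ≥ Im z`, which in the sector `Im z ≥ δ |z|` is at least `δ |z|`;
hence the remainder is at most `δ⁻¹ |z|^{-(m+1)} ∫ (1 + |t| ^ m) ‖W t‖ dν`. Treating `W` as an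
operator-valued function, via `toEuclideanCLM`, makes this bound hold directly in operator norm.
-/

lemma abs_pow_le_one_add_abs_pow (t : ℝ) {k m : ℕ} (hkm : k ≤ m) : |t| ^ k ≤ 1 + |t| ^ m := by
  rcases le_total |t| 1 with ht | ht
  · linarith [pow_le_one₀ (n := k) (abs_nonneg t) ht, pow_nonneg (abs_nonneg t) m]
  · linarith [pow_le_pow_right₀ ht hkm]

lemma Complex.im_le_norm_ofReal_sub (t : ℝ) (z : ℂ) : z.im ≤ ‖(t : ℂ) - z‖ := by
  simpa using (neg_le_abs _).trans (Complex.abs_im_le_norm ((t : ℂ) - z))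

lemma inv_sub_add_sum_inv_pow_mul_pow {z t : ℂ} (hz : z ≠ 0) (ht : t - z ≠ 0) (m : ℕ) :
    (t - z)⁻¹ + ∑ k ∈ Finset.range m, (z ^ (k + 1))⁻¹ * t ^ k = t ^ m * (z ^ m)⁻¹ * (t - z)⁻¹ := by
  induction m with
  | zero => simp
  | succ m ih =>
      rw [Finset.sum_range_succ, ← add_assoc, ih]
      field_simp
      ring

section CauchyTransform

variable {E : Type*} [NormedAddCommGroup E] [NormedSpace ℂ E]

noncomputable def cauchyTransform (ν : Measure ℝ) (w : ℝ → E) (z : ℂ) : E :=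
  ∫ t, ((t : ℂ) - z)⁻¹ • w t ∂ν

noncomputable def powerMoment (ν : Measure ℝ) (w : ℝ → E) (k : ℕ) : E :=
  ∫ t, (t : ℂ) ^ k • w t ∂ν

section Expansion

variable {ν : Measure ℝ} {w : ℝ → E} {m : ℕ}
  (hw : AEStronglyMeasurable w ν) (hmom : Integrable (fun t => (1 + |t| ^ m) * ‖w t‖) ν)
include hw hmom

lemma integrable_ofReal_pow_smul {k : ℕ} (hkm : k ≤ m) :
    Integrable (fun t : ℝ => (t : ℂ) ^ k • w t) ν := by
  refine hmom.mono' ((Complex.continuous_ofReal.pow k).aestronglyMeasurable.smul hw) ?_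
  filter_upwards with t
  rw [norm_smul, norm_pow, Complex.norm_real, Real.norm_eq_abs]
  gcongr
  exact abs_pow_le_one_add_abs_pow t hkm

lemma integrable_inv_ofReal_sub_smul {z : ℂ} (hz : 0 < z.im) :
    Integrable (fun t : ℝ => ((t : ℂ) - z)⁻¹ • w t) ν := by
  refine (hmom.const_mul z.im⁻¹).mono' ?_ ?_
  · exact ((Complex.continuous_ofReal.sub continuous_const).measurable.inv
      |>.aestronglyMeasurable).smul hw
  filter_upwards with t
  rw [norm_smul, norm_inv]
  have hw_le : ‖w t‖ ≤ (1 + |t| ^ m) * ‖w t‖ :=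
    le_mul_of_one_le_left (norm_nonneg _) (by simp [pow_nonneg])
  exact mul_le_mul (inv_anti₀ hz (Complex.im_le_norm_ofReal_sub t z)) hw_le (norm_nonneg _)
    (by positivity)

lemma cauchyTransform_add_sum_powerMoment {z : ℂ} (hz : 0 < z.im) :
    cauchyTransform ν w z + ∑ k ∈ Finset.range m, (z ^ (k + 1))⁻¹ • powerMoment ν w k =
      ∫ t, ((t : ℂ) ^ m * (z ^ m)⁻¹ * ((t : ℂ) - z)⁻¹) • w t ∂ν := by
  have hz0 : z ≠ 0 := fun h => by simp [h] at hz
  have hterm : ∀ k ∈ Finset.range m,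
      Integrable (fun t : ℝ => (z ^ (k + 1))⁻¹ • (t : ℂ) ^ k • w t) ν :=
    fun k hk => (integrable_ofReal_pow_smul hw hmom (Finset.mem_range.mp hk).le).smul _
  simp only [cauchyTransform, powerMoment, ← integral_smul]
  rw [← integral_finsetSum _ hterm, ← integral_add (integrable_inv_ofReal_sub_smul hw hmom hz)
    (integrable_finsetSum _ hterm)]
  congr 1 with t
  have hne : (t : ℂ) - z ≠ 0 := fun h => by
    have := Complex.im_le_norm_ofReal_sub t z; rw [h, norm_zero] at this; linarith
  rw [← inv_sub_add_sum_inv_pow_mul_pow hz0 hne m, add_smul, Finset.sum_smul]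
  simp only [mul_smul]

lemma norm_cauchyTransform_add_sum_powerMoment_le {z : ℂ} (hz : 0 < z.im) :
    ‖cauchyTransform ν w z + ∑ k ∈ Finset.range m, (z ^ (k + 1))⁻¹ • powerMoment ν w k‖ ≤
      (z.im * ‖z‖ ^ m)⁻¹ * ∫ t, (1 + |t| ^ m) * ‖w t‖ ∂ν := by
  rw [cauchyTransform_add_sum_powerMoment hw hmom hz, ← integral_const_mul]
  refine norm_integral_le_of_norm_le (hmom.const_mul _) (Eventually.of_forall fun t => ?_)
  have hzm : 0 < ‖z‖ ^ m := pow_pos (norm_pos_iff.mpr fun h => by simp [h] at hz) m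
  calc ‖((t : ℂ) ^ m * (z ^ m)⁻¹ * ((t : ℂ) - z)⁻¹) • w t‖
      = |t| ^ m / (‖(t : ℂ) - z‖ * ‖z‖ ^ m) * ‖w t‖ := by
        rw [norm_smul, norm_mul, norm_mul, norm_inv, norm_inv, norm_pow, norm_pow,
          Complex.norm_real, Real.norm_eq_abs]
        ring
    _ ≤ (1 + |t| ^ m) / (z.im * ‖z‖ ^ m) * ‖w t‖ := by
        gcongr
        · linarith
        · exact Complex.im_le_norm_ofReal_sub t z
    _ = (z.im * ‖z‖ ^ m)⁻¹ * ((1 + |t| ^ m) * ‖w t‖) := by ring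

end Expansion

end CauchyTransform

section Matrix

variable {α : Type*} [MeasurableSpace α] {μ : Measure α} {n : Type*} [Fintype n] [DecidableEq n]
  {𝕜 : Type*} [RCLike 𝕜]

lemma Matrix.toEuclideanCLM_single_one_apply (M : Matrix n n 𝕜) (i j : n) :
    toEuclideanCLM (𝕜 := 𝕜) M (EuclideanSpace.single j 1) i = M i j := by
  simp [EuclideanSpace.single]

lemma Matrix.toEuclideanCLM_eq_sum_single (M : Matrix n n 𝕜) :
    toEuclideanCLM (𝕜 := 𝕜) M = ∑ i, ∑ j, M i j • toEuclideanCLM (𝕜 := 𝕜) (single i j 1) := by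
  conv_lhs => rw [matrix_eq_sum_single M]
  simp only [map_sum, ← map_smul, smul_single, smul_eq_mul, mul_one]

lemma Matrix.aestronglyMeasurable_toEuclideanCLM {W : α → Matrix n n 𝕜}
    (hW : ∀ i j, AEStronglyMeasurable (fun t => W t i j) μ) :
    AEStronglyMeasurable (fun t => toEuclideanCLM (𝕜 := 𝕜) (W t)) μ := by
  refine (Finset.aestronglyMeasurable_fun_sum _ fun i _ =>
    Finset.aestronglyMeasurable_fun_sum _ fun j _ => (hW i j).smul_const _).congr
    (Eventually.of_forall fun t => (toEuclideanCLM_eq_sum_single (W t)).symm)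

lemma Matrix.toEuclideanCLM_eq_integral_of_integral_entries {W : α → Matrix n n 𝕜} {c : α → 𝕜}
    {M : Matrix n n 𝕜} (hint : Integrable (fun t => c t • toEuclideanCLM (𝕜 := 𝕜) (W t)) μ)
    (hM : ∀ i j, ∫ t, c t * W t i j ∂μ = M i j) :
    toEuclideanCLM (𝕜 := 𝕜) M = ∫ t, c t • toEuclideanCLM (𝕜 := 𝕜) (W t) ∂μ := by
  set L := ∫ t, c t • toEuclideanCLM (𝕜 := 𝕜) (W t) ∂μ
  rw [← toEuclideanCLM.apply_symm_apply L]
  refine congrArg _ (Matrix.ext fun i j => ?_)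
  rw [← toEuclideanCLM_single_one_apply ((toEuclideanCLM (𝕜 := 𝕜) (n := n)).symm L),
    StarAlgEquiv.apply_symm_apply, ← hM, ContinuousLinearMap.integral_apply hint]
  refine (integral_congr_ae (Eventually.of_forall fun t => ?_)).trans
    ((PiLp.proj (𝕜 := 𝕜) 2 (fun _ : n => 𝕜) i).integral_comp_comm
      (hint.apply_continuousLinearMap _))
  simp [toEuclideanCLM_single_one_apply]

end Matrix

theorem herglotz_transform_asymptotic_expansion_general
    {p : ℕ} (n : ℕ) (hn : 2 ≤ n)
    (ν : Measure ℝ)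
    (W : ℝ → Matrix (Fin p) (Fin p) ℂ)
    (hWmeas : ∀ i j, Measurable (fun t => W t i j))
    (hWint : Integrable
      (fun t => (1 + |t| ^ (2 * n - 2)) * ‖Matrix.toEuclideanCLM (𝕜 := ℂ) (W t)‖) ν)
    (H : ℕ → Matrix (Fin p) (Fin p) ℂ)
    (hH : ∀ k < 2 * n - 2, ∀ i j, (∫ t, (t : ℂ) ^ k * W t i j ∂ν) = H k i j)
    (φ : ℂ → Matrix (Fin p) (Fin p) ℂ)
    (hφ : ∀ z : ℂ, 0 < z.im → ∀ i j, φ z i j = ∫ t, ((t : ℂ) - z)⁻¹ * W t i j ∂ν) :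
    ∀ δ > (0 : ℝ), ∃ C > (0 : ℝ), ∃ r > (0 : ℝ), ∀ z : ℂ,
      δ * ‖z‖ ≤ z.im → r ≤ ‖z‖ →
      ‖Matrix.toEuclideanCLM (𝕜 := ℂ)
          (φ z + ∑ k ∈ Finset.range (2 * n - 2), (z ^ (k + 1))⁻¹ • H k)‖ ≤
        C / ‖z‖ ^ (2 * n - 1) := by
  intro δ hδ
  set m := 2 * n - 2
  set w : ℝ → EuclideanSpace ℂ (Fin p) →L[ℂ] EuclideanSpace ℂ (Fin p) :=
    fun t => toEuclideanCLM (𝕜 := ℂ) (W t)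
  set I := ∫ t, (1 + |t| ^ m) * ‖w t‖ ∂ν
  have hw : AEStronglyMeasurable w ν :=
    aestronglyMeasurable_toEuclideanCLM fun i j => (hWmeas i j).aestronglyMeasurable
  refine ⟨I / δ + 1, by positivity, 1, one_pos, fun z hsector hz1 => ?_⟩
  have hz : 0 < z.im := (mul_pos hδ (one_pos.trans_le hz1)).trans_le hsector
  have hφz : toEuclideanCLM (𝕜 := ℂ) (φ z) = cauchyTransform ν w z :=
    toEuclideanCLM_eq_integral_of_integral_entries (integrable_inv_ofReal_sub_smul hw hWint hz)
      fun i j => (hφ z hz i j).symm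
  have hHk : ∀ k ∈ Finset.range m, (z ^ (k + 1))⁻¹ • toEuclideanCLM (𝕜 := ℂ) (H k) =
      (z ^ (k + 1))⁻¹ • powerMoment ν w k := fun k hk => by
    rw [toEuclideanCLM_eq_integral_of_integral_entries
      (integrable_ofReal_pow_smul hw hWint (Finset.mem_range.mp hk).le)
      (hH k (Finset.mem_range.mp hk)), powerMoment]
  rw [map_add, map_sum, Finset.sum_congr rfl fun k hk => (map_smul _ _ _).trans (hHk k hk), hφz]
  calc _ ≤ (z.im * ‖z‖ ^ m)⁻¹ * I := norm_cauchyTransform_add_sum_powerMoment_le hw hWint hz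
    _ ≤ (δ * ‖z‖ * ‖z‖ ^ m)⁻¹ * I := by gcongr
    _ = I / δ / ‖z‖ ^ (2 * n - 1) := by
      rw [show 2 * n - 1 = m + 1 by omega, pow_succ']
      field_simp
    _ ≤ _ := by gcongr; linarith

/-- asymptotic expansion `φ(z) = -Σ_{k=0}^{2n-3} z^{-(k+1)} H_k + O(z^{-(2n-1)})`
as `z → ∞` non-tangentially in the upper half-plane, for
`φ(z) = ∫ (t - z)⁻¹ W(t) dν(t)` with matrix moments `H_k`. -/
theorem herglotz_transform_asymptotic_expansion
    {p : ℕ} (hp : 1 ≤ p) (n : ℕ) (hn : 2 ≤ n)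
    (ν : Measure ℝ)
    (W : ℝ → Matrix (Fin p) (Fin p) ℂ)
    (hWmeas : ∀ i j, Measurable (fun t => W t i j))
    (hWpos : ∀ᵐ t ∂ν, (W t).PosSemidef)
    (hWint : Integrable
      (fun t => (1 + |t| ^ (2 * n - 2)) * ‖Matrix.toEuclideanCLM (𝕜 := ℂ) (W t)‖) ν)
    (H : ℕ → Matrix (Fin p) (Fin p) ℂ)
    (hH : ∀ k < 2 * n - 2, ∀ i j, (∫ t, (t : ℂ) ^ k * W t i j ∂ν) = H k i j)
    (φ : ℂ → Matrix (Fin p) (Fin p) ℂ)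
    (hφ : ∀ z : ℂ, 0 < z.im → ∀ i j, φ z i j = ∫ t, ((t : ℂ) - z)⁻¹ * W t i j ∂ν) :
    ∀ δ > (0 : ℝ), ∃ C > (0 : ℝ), ∃ r > (0 : ℝ), ∀ z : ℂ,
      δ * ‖z‖ ≤ z.im → r ≤ ‖z‖ →
      ‖Matrix.toEuclideanCLM (𝕜 := ℂ)
          (φ z + ∑ k ∈ Finset.range (2 * n - 2), (z ^ (k + 1))⁻¹ • H k)‖ ≤
        C / ‖z‖ ^ (2 * n - 1) :=
  herglotz_transform_asymptotic_expansion_general n hn ν W hWmeas hWint H hH φ hφ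
end

section
/- Let {A, S, Π} be an S-node with S boundedly invertible, and let z, λ ∈ ℂ be such that I − zA* and I − λA are boundedly invertible (hence I − λ̄A* is boundedly invertible as well). Then, as operators on ℂ^{2p}: 𝔄(S,z) · J · 𝔄(S,λ̄)* = J − i(z − λ) Π*(I − zA*)^{−1} S^{−1} (I − λA)^{−1} Π. -/
/-!
Write `R = (I - zA*)⁻¹`, `T = (I - λA)⁻¹`, `M = Π* R S⁻¹ Π` and `N = Π* S⁻¹ T Π`. Since `S` is
self-adjoint, `𝔄(S,z) = I - iz M J` and `𝔄(S,λ̄)* = I + iλ J N`, so with `J² = I` the product is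
`J + iλ N - iz M + zλ M J N`, and `M J N = Π* R S⁻¹ (Π J Π*) S⁻¹ T Π`. The node identity turns
`Π J Π*` into `-i (AS - SA*)`, and the resolvent relations `λ A T = T - I`, `z R A* = R - I` give
`zλ R S⁻¹ (AS - SA*) S⁻¹ T = (z - λ) R S⁻¹ T - z R S⁻¹ + λ S⁻¹ T`,
whose last two terms cancel the linear ones.
-/

open Matrix MeasureTheory ContinuousLinearMap
open scoped ComplexOrder

noncomputable section

/-- The matrix (in the standard basis) of a continuous linear operator on `ℂ^p`. -/
def opToMat {p : ℕ} (T : EuclideanSpace ℂ (Fin p) →L[ℂ] EuclideanSpace ℂ (Fin p)) :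
    Matrix (Fin p) (Fin p) ℂ :=
  (Matrix.toEuclideanCLM (𝕜 := ℂ) (n := Fin p)).symm T

/-- The `2p × 2p` matrix `Π^* B Π` with blocks `Φ_i^* B Φ_j`, for `Π = [Φ₁ Φ₂]`. -/
def sandwich {p : ℕ} {H : Type*} [NormedAddCommGroup H] [InnerProductSpace ℂ H]
    [CompleteSpace H] (B : H →L[ℂ] H) (Φ₁ Φ₂ : EuclideanSpace ℂ (Fin p) →L[ℂ] H) :
    Matrix (Fin p ⊕ Fin p) (Fin p ⊕ Fin p) ℂ :=
  Matrix.fromBlocks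
    (opToMat (adjoint Φ₁ ∘L B ∘L Φ₁)) (opToMat (adjoint Φ₁ ∘L B ∘L Φ₂))
    (opToMat (adjoint Φ₂ ∘L B ∘L Φ₁)) (opToMat (adjoint Φ₂ ∘L B ∘L Φ₂))

/-- The frame `𝔄(S,z) = I_{2p} - i z Π^* (I - z A^*)⁻¹ S⁻¹ Π J` of an `S`-node,
identified with a `2p × 2p` complex matrix. -/
def frameS {p : ℕ} {H : Type*} [NormedAddCommGroup H] [InnerProductSpace ℂ H]
    [CompleteSpace H] (A S : H →L[ℂ] H) (Φ₁ Φ₂ : EuclideanSpace ℂ (Fin p) →L[ℂ] H)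
    (z : ℂ) : Matrix (Fin p ⊕ Fin p) (Fin p ⊕ Fin p) ℂ :=
  1 - (Complex.I * z) •
    (sandwich (Ring.inverse (1 - z • adjoint A) ∘L Ring.inverse S) Φ₁ Φ₂ *
      Matrix.fromBlocks 0 1 1 0)

/-- The `p × p` matrix `ρ(z,w) = i (w - z) Φ₂^* (I - z A^*)⁻¹ S⁻¹ (I - w A)⁻¹ Φ₂`. -/
def rhoS {p : ℕ} {H : Type*} [NormedAddCommGroup H] [InnerProductSpace ℂ H]
    [CompleteSpace H] (A S : H →L[ℂ] H) (Φ₂ : EuclideanSpace ℂ (Fin p) →L[ℂ] H)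
    (z w : ℂ) : Matrix (Fin p) (Fin p) ℂ :=
  (Complex.I * (w - z)) • opToMat (adjoint Φ₂ ∘L Ring.inverse (1 - z • adjoint A) ∘L
    Ring.inverse S ∘L Ring.inverse (1 - w • A) ∘L Φ₂)

section OpToMat

variable {p : ℕ}

lemma opToMat_comp (X Y : EuclideanSpace ℂ (Fin p) →L[ℂ] EuclideanSpace ℂ (Fin p)) :
    opToMat (X ∘L Y) = opToMat X * opToMat Y :=
  map_mul _ X Y

lemma opToMat_add (X Y : EuclideanSpace ℂ (Fin p) →L[ℂ] EuclideanSpace ℂ (Fin p)) :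
    opToMat (X + Y) = opToMat X + opToMat Y :=
  map_add _ X Y

lemma opToMat_smul (c : ℂ) (X : EuclideanSpace ℂ (Fin p) →L[ℂ] EuclideanSpace ℂ (Fin p)) :
    opToMat (c • X) = c • opToMat X :=
  map_smul _ c X

lemma conjTranspose_opToMat (X : EuclideanSpace ℂ (Fin p) →L[ℂ] EuclideanSpace ℂ (Fin p)) :
    (opToMat X)ᴴ = opToMat (adjoint X) := by
  rw [← star_eq_adjoint, ← Matrix.star_eq_conjTranspose]
  exact ((Matrix.toEuclideanCLM (𝕜 := ℂ) (n := Fin p)).symm.map_star' X).symm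

end OpToMat

section Sandwich

variable {p : ℕ} {H : Type*} [NormedAddCommGroup H] [InnerProductSpace ℂ H] [CompleteSpace H]
  (Φ₁ Φ₂ : EuclideanSpace ℂ (Fin p) →L[ℂ] H)

lemma sandwich_add (B C : H →L[ℂ] H) :
    sandwich (B + C) Φ₁ Φ₂ = sandwich B Φ₁ Φ₂ + sandwich C Φ₁ Φ₂ := by
  simp only [sandwich, add_comp, comp_add, opToMat_add, fromBlocks_add]

lemma sandwich_smul (c : ℂ) (B : H →L[ℂ] H) :
    sandwich (c • B) Φ₁ Φ₂ = c • sandwich B Φ₁ Φ₂ := by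
  simp only [sandwich, smul_comp, comp_smul, opToMat_smul, fromBlocks_smul]

lemma sandwich_sub (B C : H →L[ℂ] H) :
    sandwich (B - C) Φ₁ Φ₂ = sandwich B Φ₁ Φ₂ - sandwich C Φ₁ Φ₂ := by
  rw [sub_eq_add_neg, ← neg_one_smul ℂ C, sandwich_add, sandwich_smul, neg_one_smul,
    ← sub_eq_add_neg]

lemma conjTranspose_sandwich (B : H →L[ℂ] H) :
    (sandwich B Φ₁ Φ₂)ᴴ = sandwich (adjoint B) Φ₁ Φ₂ := by
  simp only [sandwich, fromBlocks_conjTranspose, conjTranspose_opToMat, adjoint_comp,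
    adjoint_adjoint, comp_assoc]

lemma sandwich_mul_J_mul_sandwich (B C : H →L[ℂ] H) :
    sandwich B Φ₁ Φ₂ * fromBlocks 0 1 1 0 * sandwich C Φ₁ Φ₂ =
      sandwich (B ∘L (Φ₁ ∘L adjoint Φ₂ + Φ₂ ∘L adjoint Φ₁) ∘L C) Φ₁ Φ₂ := by
  simp only [sandwich, fromBlocks_multiply, Matrix.mul_zero, Matrix.mul_one, zero_add, add_zero,
    ← opToMat_comp, add_comp, comp_add, opToMat_add, comp_assoc, fromBlocks_inj]
  refine ⟨?_, ?_, ?_, ?_⟩ <;> abel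

end Sandwich

lemma fromBlocks_zero_one_one_zero_mul_self {n α : Type*} [Fintype n] [DecidableEq n]
    [Semiring α] : (fromBlocks 0 1 1 0 : Matrix (n ⊕ n) (n ⊕ n) α) * fromBlocks 0 1 1 0 = 1 := by
  simp [fromBlocks_multiply, fromBlocks_one]

lemma conjTranspose_fromBlocks_zero_one_one_zero {n α : Type*} [DecidableEq n] [Semiring α]
    [StarRing α] : (fromBlocks 0 1 1 0 : Matrix (n ⊕ n) (n ⊕ n) α)ᴴ = fromBlocks 0 1 1 0 := by
  simp [fromBlocks_conjTranspose]

lemma one_sub_smul_mul_mul_one_add_smul {𝕜 α : Type*} [CommRing 𝕜] [Ring α] [Algebra 𝕜 α]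
    (a b : 𝕜) (M J N : α) (hJ : J * J = 1) :
    (1 - a • (M * J)) * J * (1 + b • (J * N)) = J + b • N - a • M - (a * b) • (M * J * N) := by
  have hJN : J * (J * N) = N := by rw [← mul_assoc, hJ, one_mul]
  have hMJ : M * J * J = M := by rw [mul_assoc, hJ, mul_one]
  simp only [mul_add, sub_mul, mul_one, one_mul, smul_mul_assoc, mul_smul_comm, hMJ, mul_assoc,
    hJN]
  module

section Resolvent

variable {𝕜 α : Type*} [CommRing 𝕜] [Ring α] [Algebra 𝕜 α]

lemma smul_mul_inverse_one_sub_smul {A : α} {w : 𝕜} (h : IsUnit (1 - w • A)) :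
    w • (A * Ring.inverse (1 - w • A)) = Ring.inverse (1 - w • A) - 1 := by
  have h₁ := Ring.mul_inverse_cancel _ h
  rw [sub_mul, one_mul, smul_mul_assoc] at h₁
  exact eq_sub_of_add_eq (sub_eq_iff_eq_add'.mp h₁).symm

lemma smul_inverse_one_sub_smul_mul {B : α} {z : 𝕜} (h : IsUnit (1 - z • B)) :
    z • (Ring.inverse (1 - z • B) * B) = Ring.inverse (1 - z • B) - 1 := by
  have h₁ := Ring.inverse_mul_cancel _ h
  rw [mul_sub, mul_one, mul_smul_comm] at h₁
  exact eq_sub_of_add_eq (sub_eq_iff_eq_add'.mp h₁).symm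

lemma smul_resolvent_mul_commutator_mul_resolvent {A B S : α} {z w : 𝕜} (hS : IsUnit S)
    (hz : IsUnit (1 - z • B)) (hw : IsUnit (1 - w • A)) :
    (z * w) • (Ring.inverse (1 - z • B) * Ring.inverse S * (A * S - S * B) * Ring.inverse S *
        Ring.inverse (1 - w • A)) =
      (z - w) • (Ring.inverse (1 - z • B) * Ring.inverse S * Ring.inverse (1 - w • A)) -
        z • (Ring.inverse (1 - z • B) * Ring.inverse S) +
        w • (Ring.inverse S * Ring.inverse (1 - w • A)) := by
  set R := Ring.inverse (1 - z • B)
  set T := Ring.inverse (1 - w • A)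
  set Si := Ring.inverse S
  have hSSi : S * Si = 1 := Ring.mul_inverse_cancel S hS
  have hSiS : Si * S = 1 := Ring.inverse_mul_cancel S hS
  have hsplit : R * Si * (A * S - S * B) * Si * T = R * Si * (A * T) - R * B * (Si * T) := by
    calc R * Si * (A * S - S * B) * Si * T
        = R * Si * A * (S * Si) * T - R * (Si * S) * B * Si * T := by noncomm_ring
      _ = _ := by rw [hSSi, hSiS]; noncomm_ring
  calc (z * w) • (R * Si * (A * S - S * B) * Si * T)
      = z • (R * Si * (w • (A * T))) - w • ((z • (R * B)) * (Si * T)) := by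
        rw [hsplit, smul_sub, mul_smul_comm, smul_mul_assoc, smul_smul, smul_smul, mul_comm w z]
    _ = z • (R * Si * (T - 1)) - w • ((R - 1) * (Si * T)) := by
        rw [smul_mul_inverse_one_sub_smul hw, smul_inverse_one_sub_smul_mul hz]
    _ = _ := by
        simp only [mul_sub, sub_mul, mul_one, one_mul, mul_assoc]
        module

end Resolvent

section Frame

variable {p : ℕ} {H : Type*} [NormedAddCommGroup H] [InnerProductSpace ℂ H] [CompleteSpace H]
  (A : H →L[ℂ] H) (Φ₁ Φ₂ : EuclideanSpace ℂ (Fin p) →L[ℂ] H)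

lemma adjoint_one_sub_smul (w : ℂ) :
    adjoint (1 - w • A) = 1 - starRingEnd ℂ w • adjoint A := by
  simp only [← star_eq_adjoint, star_sub, star_one, star_smul, Complex.star_def]

lemma conjTranspose_frameS {S : H →L[ℂ] H} (hS : IsSelfAdjoint S) (w : ℂ) :
    (frameS A S Φ₁ Φ₂ w)ᴴ = 1 + (Complex.I * starRingEnd ℂ w) • (fromBlocks 0 1 1 0 *
      sandwich (Ring.inverse S ∘L Ring.inverse (1 - starRingEnd ℂ w • A)) Φ₁ Φ₂) := by
  have hadj : adjoint (Ring.inverse (1 - w • adjoint A) ∘L Ring.inverse S) =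
      Ring.inverse S ∘L Ring.inverse (1 - starRingEnd ℂ w • A) := by
    rw [adjoint_comp, ← star_eq_adjoint, ← star_eq_adjoint, ← Ring.inverse_star,
      ← Ring.inverse_star, hS.star_eq, star_eq_adjoint, adjoint_one_sub_smul, adjoint_adjoint]
  have hstar : star (Complex.I * w) = -(Complex.I * starRingEnd ℂ w) := by
    simp only [Complex.star_def, map_mul, Complex.conj_I, neg_mul]
  rw [frameS, conjTranspose_sub, conjTranspose_one, conjTranspose_smul, conjTranspose_mul,
    conjTranspose_fromBlocks_zero_one_one_zero, conjTranspose_sandwich, hadj, hstar, neg_smul,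
    sub_neg_eq_add]

end Frame

theorem frame_J_identity_general
    {p : ℕ} {H : Type*} [NormedAddCommGroup H] [InnerProductSpace ℂ H]
    [CompleteSpace H] (A S : H →L[ℂ] H) (Φ₁ Φ₂ : EuclideanSpace ℂ (Fin p) →L[ℂ] H)
    (hS : IsSelfAdjoint S)
    (hnode : A ∘L S - S ∘L adjoint A =
      Complex.I • (Φ₁ ∘L adjoint Φ₂ + Φ₂ ∘L adjoint Φ₁))
    (hSinv : IsUnit S) (z lam : ℂ)
    (hz : IsUnit ((1 : H →L[ℂ] H) - z • adjoint A))
    (hlam : IsUnit ((1 : H →L[ℂ] H) - lam • A)) :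
    frameS A S Φ₁ Φ₂ z * Matrix.fromBlocks 0 1 1 0 *
        (frameS A S Φ₁ Φ₂ (starRingEnd ℂ lam))ᴴ =
      Matrix.fromBlocks 0 1 1 0 - (Complex.I * (z - lam)) •
        sandwich (Ring.inverse (1 - z • adjoint A) ∘L Ring.inverse S ∘L
          Ring.inverse (1 - lam • A)) Φ₁ Φ₂ := by
  have hPi : Φ₁ ∘L adjoint Φ₂ + Φ₂ ∘L adjoint Φ₁ = (-Complex.I) • (A ∘L S - S ∘L adjoint A) := by
    rw [hnode, smul_smul, neg_mul, Complex.I_mul_I, neg_neg, one_smul]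
  have hscalar : Complex.I * z * (Complex.I * lam) * -Complex.I = Complex.I * (z * lam) := by
    ring_nf; rw [Complex.I_pow_three]; ring
  have hres := smul_resolvent_mul_commutator_mul_resolvent hSinv hz hlam
  simp only [mul_def, comp_assoc] at hres
  rw [conjTranspose_frameS A Φ₁ Φ₂ hS, Complex.conj_conj, frameS,
    one_sub_smul_mul_mul_one_add_smul _ _ _ _ _ fromBlocks_zero_one_one_zero_mul_self,
    sandwich_mul_J_mul_sandwich, hPi]
  set R := Ring.inverse (1 - z • adjoint A)
  set T := Ring.inverse (1 - lam • A)
  set Si := Ring.inverse S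
  have hcross : (Complex.I * z * (Complex.I * lam)) •
      sandwich ((R ∘L Si) ∘L ((-Complex.I) • (A ∘L S - S ∘L adjoint A)) ∘L (Si ∘L T)) Φ₁ Φ₂ =
      Complex.I • sandwich ((z * lam) • (R ∘L Si ∘L (A ∘L S - S ∘L adjoint A) ∘L Si ∘L T))
        Φ₁ Φ₂ := by
    rw [smul_comp, comp_smul, sandwich_smul, sandwich_smul, smul_smul, smul_smul, hscalar,
      comp_assoc]
  rw [hcross, hres, sandwich_add, sandwich_sub, sandwich_smul, sandwich_smul, sandwich_smul]
  module

/-- the fundamental identity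
`𝔄(S,z) J 𝔄(S,conj λ)^* = J - i (z - λ) Π^* (I - z A^*)⁻¹ S⁻¹ (I - λ A)⁻¹ Π`. -/
theorem frame_J_identity
    {p : ℕ} (hp : 1 ≤ p) {H : Type*} [NormedAddCommGroup H] [InnerProductSpace ℂ H]
    [CompleteSpace H] (A S : H →L[ℂ] H) (Φ₁ Φ₂ : EuclideanSpace ℂ (Fin p) →L[ℂ] H)
    (hS : IsSelfAdjoint S)
    (hnode : A ∘L S - S ∘L adjoint A =
      Complex.I • (Φ₁ ∘L adjoint Φ₂ + Φ₂ ∘L adjoint Φ₁))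
    (hSinv : IsUnit S) (z lam : ℂ)
    (hz : IsUnit ((1 : H →L[ℂ] H) - z • adjoint A))
    (hlam : IsUnit ((1 : H →L[ℂ] H) - lam • A)) :
    frameS A S Φ₁ Φ₂ z * Matrix.fromBlocks 0 1 1 0 *
        (frameS A S Φ₁ Φ₂ (starRingEnd ℂ lam))ᴴ =
      Matrix.fromBlocks 0 1 1 0 - (Complex.I * (z - lam)) •
        sandwich (Ring.inverse (1 - z • adjoint A) ∘L Ring.inverse S ∘L
          Ring.inverse (1 - lam • A)) Φ₁ Φ₂ :=
  frame_J_identity_general A S Φ₁ Φ₂ hS hnode hSinv z lam hz hlam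

end
end

section
/- Let {A, S, Π} be an S-node with S boundedly invertible, and let z ∈ ℂ be such that I − zA* is boundedly invertible (hence so is I − z̄A = (I − zA*)*). Then ρ(z, z̄) = 𝔄_{21}(S,z)·𝔄_{22}(S,z)* + 𝔄_{22}(S,z)·𝔄_{21}(S,z)*. -/
open Matrix MeasureTheory ContinuousLinearMap
open scoped ComplexOrder

noncomputable section

/-!
Put `B = (I - z A*)⁻¹ S⁻¹`. The second block row of the frame is
`𝔄₂₁ = -i z Φ₂* B Φ₂`, `𝔄₂₂ = I - i z Φ₂* B Φ₁`, and `B* = S⁻¹ (I - z̄ A)⁻¹` because `S` is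
self-adjoint. Conjugating the node identity by `S⁻¹` gives `S⁻¹ A - A* S⁻¹ = i S⁻¹ Π J Π* S⁻¹`,
which rearranges to
`i (w - z) (I - z A*)⁻¹ S⁻¹ (I - w A)⁻¹ = -i z B + i w S⁻¹ (I - w A)⁻¹ + z w B Π J Π* S⁻¹ (I - w A)⁻¹`.
At `w = z̄` the last factor is `B*`, and compressing by `Φ₂` turns the right-hand side into
`𝔄₂₁ 𝔄₂₂* + 𝔄₂₂ 𝔄₂₁*`.
-/

section NodeIdentity

variable {R : Type*} [Ring R] [Algebra ℂ R]

lemma inverse_mul_sub_mul_inverse_of_node {A A' S K : R} (hS : IsUnit S)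
    (hnode : A * S - S * A' = Complex.I • K) :
    Ring.inverse S * A - A' * Ring.inverse S =
      Complex.I • (Ring.inverse S * K * Ring.inverse S) := by
  have h := congrArg (fun T => Ring.inverse S * T * Ring.inverse S) hnode
  simp only [mul_sub, sub_mul, mul_smul_comm, smul_mul_assoc] at h
  rwa [mul_assoc, mul_assoc, Ring.mul_inverse_cancel _ hS, mul_one, ← mul_assoc,
    Ring.inverse_mul_cancel _ hS, one_mul] at h

lemma smul_inverse_eq_of_node {A A' S K : R} (hS : IsUnit S)
    (hnode : A * S - S * A' = Complex.I • K) (z w : ℂ) :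
    (Complex.I * (w - z)) • Ring.inverse S =
      -(Complex.I * z) • (Ring.inverse S * (1 - w • A)) +
        (Complex.I * w) • ((1 - z • A') * Ring.inverse S) +
        (z * w) • (Ring.inverse S * K * Ring.inverse S) := by
  have hK : Ring.inverse S * K * Ring.inverse S =
      (-Complex.I) • (Ring.inverse S * A - A' * Ring.inverse S) := by
    rw [inverse_mul_sub_mul_inverse_of_node hS hnode, smul_smul, neg_mul, Complex.I_mul_I,
      neg_neg, one_smul]
  rw [hK]
  simp only [mul_sub, mul_one, sub_mul, one_mul, mul_smul_comm, smul_mul_assoc]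
  module

lemma smul_inverse_mul_inverse_mul_inverse_of_node {A A' S K : R} (hS : IsUnit S)
    (hnode : A * S - S * A' = Complex.I • K) {z w : ℂ} (hX : IsUnit (1 - z • A'))
    (hY : IsUnit (1 - w • A)) :
    (Complex.I * (w - z)) •
        (Ring.inverse (1 - z • A') * Ring.inverse S * Ring.inverse (1 - w • A)) =
      -(Complex.I * z) • (Ring.inverse (1 - z • A') * Ring.inverse S) +
        (Complex.I * w) • (Ring.inverse S * Ring.inverse (1 - w • A)) +
        (z * w) • (Ring.inverse (1 - z • A') * Ring.inverse S * K *
          (Ring.inverse S * Ring.inverse (1 - w • A))) := by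
  calc _ = Ring.inverse (1 - z • A') * ((Complex.I * (w - z)) • Ring.inverse S) *
          Ring.inverse (1 - w • A) := by
        rw [mul_smul_comm, smul_mul_assoc]
    _ = _ := by
        rw [smul_inverse_eq_of_node hS hnode z w]
        simp only [mul_add, add_mul, mul_smul_comm, smul_mul_assoc, mul_assoc,
          Ring.mul_inverse_cancel _ hY, mul_one, Ring.inverse_mul_cancel_left _ _ hX]

end NodeIdentity

lemma neg_smul_mul_star_one_sub_smul_add {R : Type*} [Ring R] [StarRing R] [Algebra ℂ R]
    [StarModule ℂ R] (c : ℂ) (t u : R) :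
    -(c • t) * star (1 - c • u) + (1 - c • u) * star (-(c • t)) =
      -c • t - star c • star t + (c * star c) • (u * star t + t * star u) := by
  simp only [star_sub, star_neg, star_one, star_smul, mul_sub, sub_mul, mul_one, one_mul,
    mul_neg, neg_mul, mul_smul_comm, smul_mul_assoc]
  module

lemma star_inverse_mul_inverse {R : Type*} [Semiring R] [StarRing R] (X : R) {S : R}
    (hS : IsSelfAdjoint S) :
    star (Ring.inverse X * Ring.inverse S) = Ring.inverse S * Ring.inverse (star X) := by
  rw [star_mul, ← Ring.inverse_star, ← Ring.inverse_star, hS.star_eq]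

section HilbertSpace

variable {H E : Type*} [NormedAddCommGroup H] [InnerProductSpace ℂ H] [CompleteSpace H]
  [NormedAddCommGroup E] [InnerProductSpace ℂ E] [CompleteSpace E]

lemma star_one_sub_smul_adjoint (A : H →L[ℂ] H) (z : ℂ) :
    star (1 - z • adjoint A) = 1 - starRingEnd ℂ z • A := by
  simp [star_eq_adjoint]

lemma star_adjoint_comp_comp (B : H →L[ℂ] H) (Φ Ψ : E →L[ℂ] H) :
    star (adjoint Φ ∘L B ∘L Ψ) = adjoint Ψ ∘L star B ∘L Φ := by
  simp only [star_eq_adjoint, adjoint_comp, adjoint_adjoint, comp_assoc]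

lemma adjoint_comp_mul_mul_star_comp (B : H →L[ℂ] H) (Φ₁ Φ₂ : E →L[ℂ] H) :
    adjoint Φ₂ ∘L (B * (Φ₁ ∘L adjoint Φ₂ + Φ₂ ∘L adjoint Φ₁) * star B) ∘L Φ₂ =
      (adjoint Φ₂ ∘L B ∘L Φ₁) * star (adjoint Φ₂ ∘L B ∘L Φ₂) +
        (adjoint Φ₂ ∘L B ∘L Φ₂) * star (adjoint Φ₂ ∘L B ∘L Φ₁) := by
  simp only [star_adjoint_comp_comp, mul_add, add_mul, add_comp, comp_add, mul_def, comp_assoc]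

lemma smul_adjoint_comp_resolvents_comp_eq (A S : H →L[ℂ] H) (Φ₁ Φ₂ : E →L[ℂ] H)
    (hS : IsSelfAdjoint S)
    (hnode : A ∘L S - S ∘L adjoint A = Complex.I • (Φ₁ ∘L adjoint Φ₂ + Φ₂ ∘L adjoint Φ₁))
    (hSinv : IsUnit S) {z : ℂ} (hz : IsUnit ((1 : H →L[ℂ] H) - z • adjoint A)) :
    (Complex.I * (starRingEnd ℂ z - z)) • (adjoint Φ₂ ∘L Ring.inverse (1 - z • adjoint A) ∘L
        Ring.inverse S ∘L Ring.inverse (1 - starRingEnd ℂ z • A) ∘L Φ₂) =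
      -((Complex.I * z) • (adjoint Φ₂ ∘L
          (Ring.inverse (1 - z • adjoint A) ∘L Ring.inverse S) ∘L Φ₂)) *
        star (1 - (Complex.I * z) • (adjoint Φ₂ ∘L
          (Ring.inverse (1 - z • adjoint A) ∘L Ring.inverse S) ∘L Φ₁)) +
      (1 - (Complex.I * z) • (adjoint Φ₂ ∘L
          (Ring.inverse (1 - z • adjoint A) ∘L Ring.inverse S) ∘L Φ₁)) *
        star (-((Complex.I * z) • (adjoint Φ₂ ∘L
          (Ring.inverse (1 - z • adjoint A) ∘L Ring.inverse S) ∘L Φ₂))) := by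
  have hstar : star (Ring.inverse (1 - z • adjoint A) * Ring.inverse S) =
      Ring.inverse S * Ring.inverse (1 - starRingEnd ℂ z • A) := by
    rw [star_inverse_mul_inverse _ hS, star_one_sub_smul_adjoint]
  have hY : IsUnit (1 - starRingEnd ℂ z • A) := star_one_sub_smul_adjoint A z ▸ hz.star
  have key := congrArg (fun T => adjoint Φ₂ ∘L T ∘L Φ₂)
    (smul_inverse_mul_inverse_mul_inverse_of_node hSinv hnode hz hY)
  simp only [add_comp, comp_add, smul_comp, comp_smul] at key
  rw [← hstar, adjoint_comp_mul_mul_star_comp, ← star_adjoint_comp_comp] at key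
  have hc : star (Complex.I * z) = -(Complex.I * starRingEnd ℂ z) := by simp
  have hcc : Complex.I * z * star (Complex.I * z) = z * starRingEnd ℂ z := by
    rw [hc, mul_neg, mul_mul_mul_comm, Complex.I_mul_I]; ring
  rw [neg_smul_mul_star_one_sub_smul_add, hcc, hc, neg_smul (Complex.I * starRingEnd ℂ z),
    sub_neg_eq_add]
  simp only [mul_def, comp_assoc] at key ⊢
  exact key

end HilbertSpace

lemma opToMat_star {p : ℕ} (T : EuclideanSpace ℂ (Fin p) →L[ℂ] EuclideanSpace ℂ (Fin p)) :
    opToMat (star T) = (opToMat T)ᴴ :=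
  (Matrix.toEuclideanCLM (𝕜 := ℂ) (n := Fin p)).symm.map_star' T

section Frame

variable {p : ℕ} {H : Type*} [NormedAddCommGroup H] [InnerProductSpace ℂ H] [CompleteSpace H]
  (A S : H →L[ℂ] H) (Φ₁ Φ₂ : EuclideanSpace ℂ (Fin p) →L[ℂ] H) (z : ℂ)

lemma frameS_toBlocks₂₁ :
    (frameS A S Φ₁ Φ₂ z).toBlocks₂₁ = opToMat (-((Complex.I * z) • (adjoint Φ₂ ∘L
      (Ring.inverse (1 - z • adjoint A) ∘L Ring.inverse S) ∘L Φ₂))) := by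
  rw [frameS, sandwich, fromBlocks_multiply, ← fromBlocks_one, fromBlocks_smul, sub_eq_add_neg,
    fromBlocks_neg, fromBlocks_add, toBlocks_fromBlocks₂₁]
  simp [opToMat]

lemma frameS_toBlocks₂₂ :
    (frameS A S Φ₁ Φ₂ z).toBlocks₂₂ = opToMat (1 - (Complex.I * z) • (adjoint Φ₂ ∘L
      (Ring.inverse (1 - z • adjoint A) ∘L Ring.inverse S) ∘L Φ₁)) := by
  rw [frameS, sandwich, fromBlocks_multiply, ← fromBlocks_one, fromBlocks_smul, sub_eq_add_neg,
    fromBlocks_neg, fromBlocks_add, toBlocks_fromBlocks₂₂]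
  simp [opToMat, sub_eq_add_neg]

end Frame

theorem rho_via_frame_blocks_general
    {p : ℕ} {H : Type*} [NormedAddCommGroup H] [InnerProductSpace ℂ H]
    [CompleteSpace H] (A S : H →L[ℂ] H) (Φ₁ Φ₂ : EuclideanSpace ℂ (Fin p) →L[ℂ] H)
    (hS : IsSelfAdjoint S)
    (hnode : A ∘L S - S ∘L adjoint A =
      Complex.I • (Φ₁ ∘L adjoint Φ₂ + Φ₂ ∘L adjoint Φ₁))
    (hSinv : IsUnit S) (z : ℂ)
    (hz : IsUnit ((1 : H →L[ℂ] H) - z • adjoint A)) :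
    rhoS A S Φ₂ z (starRingEnd ℂ z) =
      (frameS A S Φ₁ Φ₂ z).toBlocks₂₁ * ((frameS A S Φ₁ Φ₂ z).toBlocks₂₂)ᴴ +
        (frameS A S Φ₁ Φ₂ z).toBlocks₂₂ * ((frameS A S Φ₁ Φ₂ z).toBlocks₂₁)ᴴ := by
  have h := congrArg opToMat (smul_adjoint_comp_resolvents_comp_eq A S Φ₁ Φ₂ hS hnode hSinv hz)
  rw [frameS_toBlocks₂₁, frameS_toBlocks₂₂, rhoS, ← opToMat_star, ← opToMat_star]
  simp only [opToMat, map_smul, map_add, map_mul] at h ⊢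
  exact h

/-- `ρ(z, conj z) = 𝔄₂₁(S,z) 𝔄₂₂(S,z)^* + 𝔄₂₂(S,z) 𝔄₂₁(S,z)^*`. -/
theorem rho_via_frame_blocks
    {p : ℕ} (hp : 1 ≤ p) {H : Type*} [NormedAddCommGroup H] [InnerProductSpace ℂ H]
    [CompleteSpace H] (A S : H →L[ℂ] H) (Φ₁ Φ₂ : EuclideanSpace ℂ (Fin p) →L[ℂ] H)
    (hS : IsSelfAdjoint S)
    (hnode : A ∘L S - S ∘L adjoint A =
      Complex.I • (Φ₁ ∘L adjoint Φ₂ + Φ₂ ∘L adjoint Φ₁))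
    (hSinv : IsUnit S) (z : ℂ)
    (hz : IsUnit ((1 : H →L[ℂ] H) - z • adjoint A)) :
    rhoS A S Φ₂ z (starRingEnd ℂ z) =
      (frameS A S Φ₁ Φ₂ z).toBlocks₂₁ * ((frameS A S Φ₁ Φ₂ z).toBlocks₂₂)ᴴ +
        (frameS A S Φ₁ Φ₂ z).toBlocks₂₂ * ((frameS A S Φ₁ Φ₂ z).toBlocks₂₁)ᴴ :=
  rho_via_frame_blocks_general A S Φ₁ Φ₂ hS hnode hSinv z hz

end
end

section
/- Let {A, S, Π} be an S-node on the complex Hilbert space H such that S ≥ εI for some ε > 0. Let K ⊆ H be a closed subspace with orthogonal projection P : H → H onto K, and suppose PA(I − P) = 0. Define the compressed operators on K: A_K ξ := P(Aξ), S_K ξ := P(Sξ) for ξ ∈ K, and Φ₂ᴷ := P∘Φ₂ : ℂ^p → K (so that S_K ≥ εI on K and hence is invertible). Fix z in the open upper half-plane such that I − z̄A is boundedly invertible on H and I − z̄A_K is boundedly invertible on K. Then the p×p matrix ρ_H(z, z̄) − ρ_K(z, z̄) is positive semidefinite, where ρ_H(z, z̄) := i(z̄ − z)Φ₂*(I − zA*)^{−1}S^{−1}(I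 − z̄A)^{−1}Φ₂ and ρ_K(z, z̄) := i(z̄ − z)(Φ₂ᴷ)*(I − zA_K*)^{−1}S_K^{−1}(I − z̄A_K)^{−1}Φ₂ᴷ. -/
open Matrix MeasureTheory ContinuousLinearMap
open scoped ComplexOrder

noncomputable section

/-!
Put `B = (I - z̄A)⁻¹Φ₂`. Since `(I - zA*)⁻¹ = ((I - z̄A)⁻¹)*`, one has
`ρ_H(z, z̄) = 2 Im z · B* S⁻¹ B`. The hypothesis `PA(I - P) = 0` says `PA = A_K P`, hence
`P(I - z̄A)⁻¹ = (I - z̄A_K)⁻¹P` and `ρ_K(z, z̄) = 2 Im z · B* P* S_K⁻¹ P B`. So it suffices that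
`T = P* S_K⁻¹ P ≤ S⁻¹`. As `S_K = P S P*`, the operator `T` satisfies `TST = T`, and then
`S⁻¹ - T = (I - ST)* S⁻¹ (I - ST) ≥ 0`.
-/

theorem le_ringInverse_of_mul_mul_eq_self {R : Type*} [Ring R] [StarRing R] [PartialOrder R]
    [StarOrderedRing R] {S T : R} (hS : IsUnit S) (hS_sa : IsSelfAdjoint S)
    (hS_inv : 0 ≤ Ring.inverse S) (hT : IsSelfAdjoint T) (hTST : T * S * T = T) :
    T ≤ Ring.inverse S := by
  have key : Ring.inverse S - T = star (1 - S * T) * Ring.inverse S * (1 - S * T) := by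
    rw [star_sub, star_one, star_mul, hS_sa.star_eq, hT.star_eq]
    calc Ring.inverse S - T = Ring.inverse S - T * (S * Ring.inverse S) - Ring.inverse S * S * T
          + T * (S * Ring.inverse S) * S * T := by
            rw [Ring.mul_inverse_cancel S hS, Ring.inverse_mul_cancel S hS, mul_one, one_mul,
              hTST, sub_add_cancel]
      _ = _ := by noncomm_ring
  rw [← sub_nonneg, key]
  exact star_left_conjugate_nonneg hS_inv _

theorem comp_ringInverse_of_comp_eq {𝕜 E F : Type*} [NontriviallyNormedField 𝕜]
    [NormedAddCommGroup E] [NormedSpace 𝕜 E] [NormedAddCommGroup F] [NormedSpace 𝕜 F]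
    {M : E →L[𝕜] E} {N : F →L[𝕜] F} {Q : E →L[𝕜] F}
    (hQ : Q ∘L M = N ∘L Q) (hM : IsUnit M) (hN : IsUnit N) :
    Q ∘L Ring.inverse M = Ring.inverse N ∘L Q := by
  calc Q ∘L Ring.inverse M = (Ring.inverse N * N) ∘L Q ∘L Ring.inverse M := by
        rw [Ring.inverse_mul_cancel N hN, one_def, id_comp]
    _ = Ring.inverse N ∘L Q ∘L (M * Ring.inverse M) := by
        rw [mul_def, mul_def, comp_assoc, ← comp_assoc N, ← hQ]
        rfl
    _ = Ring.inverse N ∘L Q := by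
        rw [Ring.mul_inverse_cancel M hM, one_def, comp_id]

theorem posSemidef_opToMat_of_isPositive {p : ℕ}
    {T : EuclideanSpace ℂ (Fin p) →L[ℂ] EuclideanSpace ℂ (Fin p)} (hT : T.IsPositive) :
    (opToMat T).PosSemidef := by
  rwa [← Matrix.isPositive_toEuclideanLin_iff, ← Matrix.coe_toEuclideanCLM_eq_toEuclideanLin,
    isPositive_toLinearMap_iff, opToMat, StarAlgEquiv.apply_symm_apply]

theorem orthogonalProjection_comp_eq_compression_comp {E : Type*} [NormedAddCommGroup E]
    [InnerProductSpace ℂ E] {K : Submodule ℂ E} [CompleteSpace K] {A : E →L[ℂ] E}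
    (hPA : (K.subtypeL ∘L K.orthogonalProjection) ∘L A ∘L
      (1 - K.subtypeL ∘L K.orthogonalProjection) = 0) :
    K.orthogonalProjection ∘L A =
      (K.orthogonalProjection ∘L A ∘L K.subtypeL) ∘L K.orthogonalProjection := by
  ext1 x
  have hx := congr($hPA x)
  simp only [ContinuousLinearMap.comp_apply, _root_.sub_apply, _root_.zero_apply,
    map_sub] at hx
  exact Subtype.ext (sub_eq_zero.1 hx)

section HilbertSpace

variable {E F : Type*} [NormedAddCommGroup E] [InnerProductSpace ℂ E] [CompleteSpace E]
  [NormedAddCommGroup F] [InnerProductSpace ℂ F] [CompleteSpace F]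

theorem isUnit_of_coercive {S : E →L[ℂ] E} {ε : ℝ} (hε : 0 < ε)
    (h : ∀ f, ε * ‖f‖ ^ 2 ≤ (inner ℂ (S f) f : ℂ).re) : IsUnit S :=
  isUnit_of_forall_le_norm_inner_map S (c := ⟨ε, hε.le⟩) hε fun f =>
    (mul_comm _ ε).trans_le ((h f).trans (Complex.re_le_norm _))

theorem coercive_adjoint_conj {S : E →L[ℂ] E} {ε : ℝ}
    (h : ∀ f, ε * ‖f‖ ^ 2 ≤ (inner ℂ (S f) f : ℂ).re) {V : F →L[ℂ] E}
    (hV : ∀ f, ‖V f‖ = ‖f‖) (f : F) :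
    ε * ‖f‖ ^ 2 ≤ (inner ℂ ((adjoint V ∘L S ∘L V) f) f : ℂ).re := by
  rw [ContinuousLinearMap.comp_apply, adjoint_inner_left, ← hV]
  exact h (V f)

theorem conj_adjoint_ringInverse_adjoint_conj_le {S : E →L[ℂ] E} (hS : S.IsPositive)
    (hS_unit : IsUnit S) (V : F →L[ℂ] E) (hSV : IsUnit (adjoint V ∘L S ∘L V)) :
    V ∘L Ring.inverse (adjoint V ∘L S ∘L V) ∘L adjoint V ≤ Ring.inverse S := by
  have hSV_sa : IsSelfAdjoint (adjoint V ∘L S ∘L V) := hS.isSelfAdjoint.adjoint_conj V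
  refine le_ringInverse_of_mul_mul_eq_self hS_unit hS.isSelfAdjoint
    ((CFC.ringInverse_nonneg_iff_nonneg_of_isUnit hS_unit).2 ((nonneg_iff_isPositive S).2 hS))
    (hSV_sa.ringInverse.conj_adjoint V) ?_
  calc _ = V ∘L (Ring.inverse (adjoint V ∘L S ∘L V) * (adjoint V ∘L S ∘L V)) ∘L
        Ring.inverse (adjoint V ∘L S ∘L V) ∘L adjoint V := rfl
    _ = _ := by rw [Ring.inverse_mul_cancel _ hSV, one_def, id_comp]

theorem rhoS_conj_eq {p : ℕ} (A S : E →L[ℂ] E) (Φ₂ : EuclideanSpace ℂ (Fin p) →L[ℂ] E)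
    (z : ℂ) :
    rhoS A S Φ₂ z (starRingEnd ℂ z) = ((2 * z.im : ℝ) : ℂ) •
      opToMat (adjoint (Ring.inverse (1 - starRingEnd ℂ z • A) ∘L Φ₂) ∘L Ring.inverse S ∘L
        Ring.inverse (1 - starRingEnd ℂ z • A) ∘L Φ₂) := by
  have hstar : 1 - z • adjoint A = star (1 - starRingEnd ℂ z • A) := by
    rw [star_sub, star_one, star_smul, star_eq_adjoint, Complex.star_def, Complex.conj_conj]
  have hscalar : Complex.I * (starRingEnd ℂ z - z) = ((2 * z.im : ℝ) : ℂ) :=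
    Complex.ext (by simp; ring) (by simp)
  rw [rhoS, hstar, Ring.inverse_star, hscalar, adjoint_comp]
  rfl

end HilbertSpace

theorem rho_monotone_under_compression_general
    {p : ℕ} {H : Type*} [NormedAddCommGroup H] [InnerProductSpace ℂ H]
    [CompleteSpace H] (A S : H →L[ℂ] H) (Φ₂ : EuclideanSpace ℂ (Fin p) →L[ℂ] H)
    (hS : IsSelfAdjoint S)
    (ε : ℝ) (hε : 0 < ε)
    (hSpos : ∀ f : H, ε * ‖f‖ ^ 2 ≤ (inner ℂ (S f) f : ℂ).re)
    (K : Submodule ℂ H) [CompleteSpace K]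
    (hPA : (K.subtypeL ∘L K.orthogonalProjection) ∘L A ∘L
      (1 - K.subtypeL ∘L K.orthogonalProjection) = 0)
    (z : ℂ) (hz : 0 < z.im)
    (hinv : IsUnit ((1 : H →L[ℂ] H) - (starRingEnd ℂ z) • A))
    (hinvK : IsUnit ((1 : K →L[ℂ] K) -
      (starRingEnd ℂ z) • (K.orthogonalProjection ∘L A ∘L K.subtypeL))) :
    (rhoS A S Φ₂ z (starRingEnd ℂ z) -
      rhoS (K.orthogonalProjection ∘L A ∘L K.subtypeL)
        (K.orthogonalProjection ∘L S ∘L K.subtypeL)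
        (K.orthogonalProjection ∘L Φ₂) z (starRingEnd ℂ z)).PosSemidef := by
  set P := K.orthogonalProjection
  set w := starRingEnd ℂ z
  set B := Ring.inverse (1 - w • A) ∘L Φ₂
  have hP : P = adjoint K.subtypeL := K.adjoint_subtypeL.symm
  have hS_pos : S.IsPositive :=
    ⟨isSelfAdjoint_iff_isSymmetric.mp hS, fun f => (mul_nonneg hε.le (sq_nonneg _)).trans (hSpos f)⟩
  have hSK : IsUnit (P ∘L S ∘L K.subtypeL) :=
    isUnit_of_coercive hε (hP ▸ coercive_adjoint_conj hSpos fun _ => rfl)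
  have hcomm : P ∘L (1 - w • A) = (1 - w • (P ∘L A ∘L K.subtypeL)) ∘L P := by
    simp only [comp_sub, sub_comp, comp_smul, smul_comp, one_def, comp_id, id_comp]
    rw [orthogonalProjection_comp_eq_compression_comp hPA]
  have hC : Ring.inverse (1 - w • (P ∘L A ∘L K.subtypeL)) ∘L P ∘L Φ₂ = P ∘L B := by
    rw [← comp_assoc, ← comp_ringInverse_of_comp_eq hcomm hinv hinvK, comp_assoc]
  have hdiff : adjoint B ∘L Ring.inverse S ∘L B -
      adjoint (P ∘L B) ∘L Ring.inverse (P ∘L S ∘L K.subtypeL) ∘L P ∘L B =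
      adjoint B ∘L (Ring.inverse S - K.subtypeL ∘L Ring.inverse (P ∘L S ∘L K.subtypeL) ∘L P)
        ∘L B := by
    rw [adjoint_comp P B, hP, adjoint_adjoint, sub_comp, comp_sub]
    rfl
  have hle := conj_adjoint_ringInverse_adjoint_conj_le hS_pos (isUnit_of_coercive hε hSpos)
    K.subtypeL (hP ▸ hSK)
  rw [rhoS_conj_eq, rhoS_conj_eq, hC, ← smul_sub, opToMat, opToMat, ← map_sub, hdiff]
  exact (posSemidef_opToMat_of_isPositive (((le_def _ _).1 (hP ▸ hle)).adjoint_conj B)).smul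
    (by exact_mod_cast (mul_pos two_pos hz).le)

/-- monotonicity of `ρ(z, conj z)` under compression of the `S`-node to an
invariant-type closed subspace: `ρ_H(z, conj z) - ρ_K(z, conj z) ≥ 0`. -/
theorem rho_monotone_under_compression
    {p : ℕ} (hp : 1 ≤ p) {H : Type*} [NormedAddCommGroup H] [InnerProductSpace ℂ H]
    [CompleteSpace H] (A S : H →L[ℂ] H) (Φ₁ Φ₂ : EuclideanSpace ℂ (Fin p) →L[ℂ] H)
    (hS : IsSelfAdjoint S)
    (hnode : A ∘L S - S ∘L adjoint A =
      Complex.I • (Φ₁ ∘L adjoint Φ₂ + Φ₂ ∘L adjoint Φ₁))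
    (ε : ℝ) (hε : 0 < ε)
    (hSpos : ∀ f : H, ε * ‖f‖ ^ 2 ≤ (inner ℂ (S f) f : ℂ).re)
    (K : Submodule ℂ H) [CompleteSpace K]
    (hPA : (K.subtypeL ∘L K.orthogonalProjection) ∘L A ∘L
      (1 - K.subtypeL ∘L K.orthogonalProjection) = 0)
    (z : ℂ) (hz : 0 < z.im)
    (hinv : IsUnit ((1 : H →L[ℂ] H) - (starRingEnd ℂ z) • A))
    (hinvK : IsUnit ((1 : K →L[ℂ] K) -
      (starRingEnd ℂ z) • (K.orthogonalProjection ∘L A ∘L K.subtypeL))) :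
    (rhoS A S Φ₂ z (starRingEnd ℂ z) -
      rhoS (K.orthogonalProjection ∘L A ∘L K.subtypeL)
        (K.orthogonalProjection ∘L S ∘L K.subtypeL)
        (K.orthogonalProjection ∘L Φ₂) z (starRingEnd ℂ z)).PosSemidef :=
  rho_monotone_under_compression_general A S Φ₂ hS ε hε hSpos K hPA z hz hinv hinvK
end
end

section
/- Let n ≥ 1, p ≥ 1, let s_0, s_{−1}, …, s_{1−n} be p×p complex matrices with s_0 = s_0*, and set s_k := s_{−k}* for k > 0. Let S = {s_{j−i}}_{i,j=1}^n be the np×np self-adjoint block Toeplitz matrix. Let A be the np×np block matrix whose (i,j) block equals 0 for j > i, (i/2)·I_p for j = i, and i·I_p for j < i. Let ν be any p×p Hermitian matrix, let Φ₁ be the np×p block column consisting of n copies of I_p, and let Φ₂ be the np×p block column whose i-th block equals s_0/2 + s_{−1} + … + s_{1−i} + i·ν (for i = 1 the block is s_0/2 + i·ν). Then the operator identity AS − SA* = i(Φ₁Φ₂* + Φ₂Φ₁*) holds. -/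
open Matrix Finset

lemma key (F : ℤ → ℂ) (i j : ℕ) :
    F ((j:ℤ) - (i:ℤ)) + (∑ k ∈ range i, F ((j:ℤ) - (k:ℤ))) + ∑ k ∈ range j, F ((k:ℤ) - (i:ℤ))
    = F 0 + (∑ k ∈ range j, F ((k:ℤ) + 1)) + ∑ k ∈ range i, F (-((k:ℤ) + 1)) := by
  have hL : ∑ m ∈ range (i + 1 + j), F ((j:ℤ) - (m:ℤ))
      = F ((j:ℤ) - (i:ℤ)) + (∑ k ∈ range i, F ((j:ℤ) - (k:ℤ))) + ∑ k ∈ range j, F ((k:ℤ) - (i:ℤ)) := by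
    rw [Finset.sum_range_add, Finset.sum_range_succ]
    have h3 : ∑ k ∈ range j, F ((j:ℤ) - ((i + 1 + k : ℕ) : ℤ))
        = ∑ k ∈ range j, F ((k:ℤ) - (i:ℤ)) := by
      rw [← Finset.sum_range_reflect (fun k => F ((k:ℤ) - (i:ℤ))) j]
      apply Finset.sum_congr rfl
      intro k hk
      simp only [Finset.mem_range] at hk
      congr 1
      push_cast [Nat.sub_sub]
      omega
    rw [h3]; ring
  have hR : ∑ m ∈ range (j + 1 + i), F ((j:ℤ) - (m:ℤ))
      = F 0 + (∑ k ∈ range j, F ((k:ℤ) + 1)) + ∑ k ∈ range i, F (-((k:ℤ) + 1)) := by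
    rw [Finset.sum_range_add, Finset.sum_range_succ]
    have h1 : ∑ k ∈ range j, F ((j:ℤ) - (k:ℤ)) = ∑ k ∈ range j, F ((k:ℤ) + 1) := by
      rw [← Finset.sum_range_reflect (fun k => F ((k:ℤ) + 1)) j]
      apply Finset.sum_congr rfl
      intro k hk
      simp only [Finset.mem_range] at hk
      congr 1
      push_cast [Nat.sub_sub]
      omega
    have h2 : ∑ k ∈ range i, F ((j:ℤ) - ((j + 1 + k : ℕ) : ℤ))
        = ∑ k ∈ range i, F (-((k:ℤ) + 1)) := by
      apply Finset.sum_congr rfl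
      intro k _
      congr 1
      push_cast
      ring
    rw [h1, h2]
    have : ((j:ℤ) - (j:ℤ)) = 0 := by ring
    rw [this]; ring
  rw [← hL, ← hR]
  congr 2
  omega

lemma auxsum {n : ℕ} (i : Fin n) (f : ℕ → ℂ) :
    (∑ x : Fin n, if (x:ℕ) < (i:ℕ) then f ↑x else 0) = ∑ k ∈ Finset.range ↑i, f k := by
  rw [Fin.sum_univ_eq_sum_range (fun k => if k < (i:ℕ) then f k else 0) n]
  rw [← Finset.sum_subset (Finset.range_subset_range.2 (le_of_lt i.isLt))]
  · exact Finset.sum_congr rfl (fun k hk => by simp [Finset.mem_range.1 hk])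
  · intro k _ hk
    simp only [Finset.mem_range, not_lt] at hk
    simp [not_lt.2 hk]

lemma aux1 {n : ℕ} (i : Fin n) (g : ℕ → ℂ) (c d : ℂ) :
    (∑ x : Fin n, if i = x then c * g ↑x else if x < i then d * g ↑x else 0)
    = c * g ↑i + d * ∑ k ∈ Finset.range ↑i, g k := by
  have h : ∀ x : Fin n, (if i = x then c * g ↑x else if x < i then d * g ↑x else 0)
      = (if x = i then c * g ↑x else 0) + (if (x:ℕ) < (i:ℕ) then d * g ↑x else 0) := by
    intro x
    rcases eq_or_ne i x with h | h
    · subst h; simp [lt_irrefl]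
    · rw [if_neg h, if_neg (show ¬ x = i from fun hh => h hh.symm), zero_add]
      by_cases hxi : (x:ℕ) < (i:ℕ)
      · rw [if_pos hxi, if_pos (Fin.lt_def.2 hxi)]
      · rw [if_neg hxi, if_neg (fun hh => hxi (Fin.lt_def.1 hh))]
  simp only [h, Finset.sum_add_distrib, Finset.sum_ite_eq', Finset.mem_univ, if_true]
  rw [auxsum i (fun k => d * g k), Finset.mul_sum]

lemma aux2 {n : ℕ} (i : Fin n) (g : ℕ → ℂ) (c d : ℂ) :
    (∑ x : Fin n, if i = x then g ↑x * c else if x < i then g ↑x * d else 0)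
    = g ↑i * c + (∑ k ∈ Finset.range ↑i, g k) * d := by
  have := aux1 i g c d
  simp only [mul_comm] at this ⊢
  exact this

/-- the operator identity `A S - S A^* = i (Φ₁ Φ₂^* + Φ₂ Φ₁^*)` for a
self-adjoint block Toeplitz matrix `S = {s_{j-i}}`. -/
theorem toeplitz_operator_identity
    {p n : ℕ} (hp : 1 ≤ p) (hn : 1 ≤ n)
    (s : ℤ → Matrix (Fin p) (Fin p) ℂ)
    (hs0 : (s 0)ᴴ = s 0)
    (hsym : ∀ k : ℤ, 0 < k → s k = (s (-k))ᴴ)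
    (ν : Matrix (Fin p) (Fin p) ℂ) (hν : νᴴ = ν)
    (S : Matrix (Fin n × Fin p) (Fin n × Fin p) ℂ)
    (hS : S = Matrix.of fun x y => s ((y.1 : ℤ) - (x.1 : ℤ)) x.2 y.2)
    (A : Matrix (Fin n × Fin p) (Fin n × Fin p) ℂ)
    (hA : A = Matrix.of fun x y =>
      (if x.1 = y.1 then Complex.I / 2 else if y.1 < x.1 then Complex.I else 0) *
        (if x.2 = y.2 then 1 else 0))
    (Φ₁ : Matrix (Fin n × Fin p) (Fin p) ℂ)
    (hΦ₁ : Φ₁ = Matrix.of fun x b => if x.2 = b then 1 else 0)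
    (Φ₂ : Matrix (Fin n × Fin p) (Fin p) ℂ)
    (hΦ₂ : Φ₂ = Matrix.of fun x b =>
      ((2 : ℂ)⁻¹ • s 0 + (∑ k ∈ Finset.range (x.1 : ℕ), s (-((k : ℤ) + 1))) +
        Complex.I • ν) x.2 b) :
    A * S - S * Aᴴ = Complex.I • (Φ₁ * Φ₂ᴴ + Φ₂ * Φ₁ᴴ) := by
  subst hS hA hΦ₁ hΦ₂
  ext ⟨i,a⟩ ⟨j,b⟩
  simp only [Matrix.sub_apply, Matrix.mul_apply, Matrix.smul_apply, Matrix.add_apply,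
    Matrix.conjTranspose_apply, Matrix.of_apply, Fintype.sum_prod_type, smul_eq_mul,
    Matrix.sum_apply, mul_ite, ite_mul, one_mul, mul_one, zero_mul, mul_zero,
    Finset.sum_ite_eq, Finset.sum_ite_eq', Finset.mem_univ, if_true, map_sum,
    Pi.smul_apply, map_zero, _root_.map_one, Complex.conj_I,
    apply_ite (star : ℂ → ℂ), star_zero, star_one]
  rw [aux1 i (fun k => s ((j:ℤ) - (k:ℤ)) a b), aux2 j (fun k => s ((k:ℤ) - (i:ℤ)) a b)]
  have h0 : star (s 0 b a) = s 0 a b := by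
    conv_rhs => rw [← hs0]
    simp [Matrix.conjTranspose_apply]
  have hνe : star (ν b a) = ν a b := by
    conv_rhs => rw [← hν]
    simp [Matrix.conjTranspose_apply]
  have hk : ∀ k : ℕ, star (s (-((k:ℤ) + 1)) b a) = s ((k:ℤ) + 1) a b := by
    intro k
    have := hsym ((k:ℤ)+1) (by positivity)
    rw [this]
    simp [Matrix.conjTranspose_apply]
  have hstar : star (2⁻¹ * s 0 b a + ∑ x ∈ Finset.range ↑j, s (-(↑x + 1)) b a + Complex.I * ν b a)
      = 2⁻¹ * s 0 a b + (∑ x ∈ Finset.range ↑j, s ((x:ℤ) + 1) a b) - Complex.I * ν a b := by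
    simp only [star_add, star_mul', star_sum, h0, hνe, hk, Complex.conj_I]
    have : star (2⁻¹ : ℂ) = 2⁻¹ := by
      rw [Complex.star_def, map_inv₀, Complex.conj_ofNat]
    rw [this]
    have hsI : star Complex.I = -Complex.I := by
      rw [Complex.star_def, Complex.conj_I]
    rw [hsI]
    ring
  rw [hstar]
  have hsI : star Complex.I = -Complex.I := by rw [Complex.star_def, Complex.conj_I]
  have hsI2 : star (Complex.I / 2) = -(Complex.I / 2) := by
    rw [Complex.star_def, map_div₀, Complex.conj_I, Complex.conj_ofNat]
    ring
  rw [hsI, hsI2]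
  linear_combination Complex.I * key (fun m => s m a b) ↑i ↑j
end

section
/- Let n ≥ 1 and let H_0, …, H_{2n−2} be p×p complex matrices with H_k = H_k* such that the block Hankel matrix H(n) = {H_{i+j−2}}_{i,j=1}^n is positive definite (hence H(r) = {H_{i+j−2}}_{i,j=1}^r > 0 for 1 ≤ r ≤ n). For 1 ≤ r ≤ n set T(r) := H(r)^{−1}, P₂(r) := [0 … 0 I_p] (the p×rp matrix selecting the last block), t_r := P₂(r)T(r)P₂(r)*, and Π(r) := [Φ₁(r) Φ₂(r)] with Φ₁(r) = −i·(0, H_0, …, H_{r−2})ᵀ and Φ₂(r) = (I_p, 0, …, 0)ᵀ (block columns of size rp×p). Define the Verblunsky-type coefficients ω_k := P₂(k+1)T(k+1)Π(k+1) (p×2p matrices, 0 ≤ k ≤ n−1). Then: (a) t_r is positive definite for 1 ≤ r ≤ n; (b) ω_0 = [0 t_1]; (c) ω_k J ω_k* = 0 for 0 ≤ k ≤ n−1; and (d) i·ω_k J ω_{k−1}* = t_{k+1} for 1 ≤ k ≤ n−1, where J = [[0, I_p],[I_p, 0]]. -/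
open Matrix
open scoped ComplexOrder

noncomputable section

/-- The `rp × rp` block Hankel matrix `H(r) = {H_{i+j-2}}_{i,j=1}^r`. -/
def hankelMat (p : ℕ) (Hm : ℕ → Matrix (Fin p) (Fin p) ℂ) (r : ℕ) :
    Matrix (Fin r × Fin p) (Fin r × Fin p) ℂ :=
  Matrix.of fun x y => Hm ((x.1 : ℕ) + (y.1 : ℕ)) x.2 y.2

/-- The `p × rp` matrix `P₂(r) = [0 … 0 I_p]` selecting the last block. -/
def P2mat (p r : ℕ) : Matrix (Fin p) (Fin r × Fin p) ℂ :=
  Matrix.of fun a y => if (y.1 : ℕ) = r - 1 ∧ a = y.2 then 1 else 0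

/-- `t_r = P₂(r) H(r)⁻¹ P₂(r)^*`. -/
def tMat (p : ℕ) (Hm : ℕ → Matrix (Fin p) (Fin p) ℂ) (r : ℕ) :
    Matrix (Fin p) (Fin p) ℂ :=
  P2mat p r * (hankelMat p Hm r)⁻¹ * (P2mat p r)ᴴ

/-- `Π(r) = [Φ₁(r) Φ₂(r)]` with `Φ₁(r) = -i (0, H_0, …, H_{r-2})ᵀ`,
`Φ₂(r) = (I_p, 0, …, 0)ᵀ`. -/
def PiMat (p : ℕ) (Hm : ℕ → Matrix (Fin p) (Fin p) ℂ) (r : ℕ) :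
    Matrix (Fin r × Fin p) (Fin p ⊕ Fin p) ℂ :=
  Matrix.fromCols
    (Matrix.of fun x b =>
      -Complex.I * (if (x.1 : ℕ) = 0 then 0 else Hm ((x.1 : ℕ) - 1) x.2 b))
    (Matrix.of fun x b => if (x.1 : ℕ) = 0 ∧ x.2 = b then (1 : ℂ) else 0)

/-- The Verblunsky-type coefficient `ω_k = P₂(k+1) H(k+1)⁻¹ Π(k+1)`. -/
def omegaMat (p : ℕ) (Hm : ℕ → Matrix (Fin p) (Fin p) ℂ) (k : ℕ) :
    Matrix (Fin p) (Fin p ⊕ Fin p) ℂ :=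
  P2mat p (k + 1) * (hankelMat p Hm (k + 1))⁻¹ * PiMat p Hm (k + 1)

/-!
The Hankel structure enters only through the displacement identity
`i Π(r) J Π(s)* = S H(s) - H(r) S*` (for `|r - s| ≤ 1`), where `S` is the block down-shift
`shiftMat`. Sandwiching it between `P₂(r) H(r)⁻¹` and `H(s)⁻¹ P₂(s)*` cancels the Hankel matrices:
`i ω_{r-1} J ω_{s-1}* = P₂(r) H(r)⁻¹ S P₂(s)* - P₂(r) S* H(s)⁻¹ P₂(s)*`.
The shift pushes the last block out of range unless `r = s + 1`, when `S P₂(s)* = P₂(r)*`;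
this gives (c) and (d). Part (a) holds because `t_r` compresses `H(r)⁻¹ > 0` by the coisometry
`P₂(r)`, and (b) because `Π(1) = [0 I]`.
-/

theorem Fin.sum_ite_eq_add_one {M : Type*} [AddCommMonoid M] {s i : ℕ} (f : ℕ → M) :
    ∑ z : Fin s, (if i = (z : ℕ) + 1 then f z else 0) =
      if 1 ≤ i ∧ i ≤ s then f (i - 1) else 0 := by
  rw [Fin.sum_univ_eq_sum_range (fun z => if i = z + 1 then f z else 0)]
  split_ifs with h
  · rw [Finset.sum_eq_single (i - 1) (fun z _ hz => if_neg (by omega)) (by simp; omega)]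
    simp only [if_pos (show i = i - 1 + 1 by omega)]
  · exact Finset.sum_eq_zero fun z hz => if_neg (by simp at hz; omega)

theorem fromCols_mul_fromBlocks_mul_conjTranspose_fromCols {R m m' q : Type*} [Semiring R]
    [Star R] [Fintype q] [DecidableEq q] (A B : Matrix m q R) (C D : Matrix m' q R) :
    fromCols A B * (fromBlocks 0 1 1 0 : Matrix (q ⊕ q) (q ⊕ q) R) * (fromCols C D)ᴴ =
      A * Dᴴ + B * Cᴴ := by
  rw [fromCols_mul_fromBlocks, conjTranspose_fromCols_eq_fromRows_conjTranspose,
    fromCols_mul_fromRows]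
  simp only [Matrix.mul_zero, Matrix.mul_one, add_zero, add_comm]

def shiftMat (p r s : ℕ) : Matrix (Fin r × Fin p) (Fin s × Fin p) ℂ :=
  Matrix.of fun x y => if x.2 = y.2 ∧ (x.1 : ℕ) = y.1 + 1 then 1 else 0

variable {p : ℕ} {Hm : ℕ → Matrix (Fin p) (Fin p) ℂ}

local notation "𝕁" => (fromBlocks 0 1 1 0 : Matrix (Fin p ⊕ Fin p) (Fin p ⊕ Fin p) ℂ)

theorem hankelMat_isHermitian {r : ℕ} (hHm : ∀ k ≤ 2 * r - 2, (Hm k)ᴴ = Hm k) :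
    (hankelMat p Hm r).IsHermitian := by
  ext ⟨i, a⟩ ⟨j, b⟩
  have := i.isLt
  have := j.isLt
  rw [conjTranspose_apply, hankelMat, of_apply, of_apply, ← conjTranspose_apply,
    hHm _ (by omega), add_comm]

theorem hankelMat_posDef_of_le {r n : ℕ} (h : r ≤ n) (hpos : (hankelMat p Hm n).PosDef) :
    (hankelMat p Hm r).PosDef :=
  hpos.submatrix (e := Prod.map (Fin.castLE h) id) ((Fin.castLE_injective h).prodMap fun _ _ => id)

theorem mul_conjTranspose_P2mat_apply {α : Type*} {r : ℕ} (hr : 1 ≤ r)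
    (M : Matrix α (Fin r × Fin p) ℂ) (x : α) (a : Fin p) :
    (M * (P2mat p r)ᴴ) x a = M x (⟨r - 1, by omega⟩, a) := by
  rw [mul_apply, Finset.sum_eq_single (⟨r - 1, by omega⟩, a)]
  · simp [P2mat]
  · rintro ⟨j, b⟩ - hjb
    have : ¬((j : ℕ) = r - 1 ∧ a = b) := fun ⟨hj, hab⟩ =>
      hjb (Prod.ext (Fin.ext hj) hab.symm)
    simp [P2mat, this]
  · simp

theorem P2mat_mul_conjTranspose_P2mat {r : ℕ} (hr : 1 ≤ r) :
    P2mat p r * (P2mat p r)ᴴ = 1 := by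
  ext a b
  rw [mul_conjTranspose_P2mat_apply hr]
  simp [P2mat, one_apply]

theorem tMat_posDef {r : ℕ} (hr : 1 ≤ r) (h : (hankelMat p Hm r).PosDef) :
    (tMat p Hm r).PosDef := by
  refine h.inv.mul_mul_conjTranspose_same fun v w hvw => ?_
  simpa [vecMul_vecMul, P2mat_mul_conjTranspose_P2mat hr] using
    congrArg (· ᵥ* (P2mat p r)ᴴ) hvw

theorem PiMat_one : PiMat p Hm 1 = fromCols 0 (P2mat p 1)ᴴ := by
  ext ⟨i, a⟩ (b | b) <;> simp [PiMat, P2mat, Fin.fin_one_eq_zero i, eq_comm]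

theorem omegaMat_zero : omegaMat p Hm 0 = fromCols 0 (tMat p Hm 1) := by
  rw [omegaMat, PiMat_one, mul_fromCols, Matrix.mul_zero, tMat]

theorem shiftMat_mul_hankelMat {r s : ℕ} (h : r ≤ s + 1) (i : Fin r) (j : Fin s) (a b : Fin p) :
    (shiftMat p r s * hankelMat p Hm s) (i, a) (j, b) =
      if (i : ℕ) = 0 then 0 else Hm (i - 1 + j) a b := by
  simp only [shiftMat, ite_and, hankelMat, mul_apply, of_apply, ite_mul, one_mul, zero_mul,
    Fintype.sum_prod_type, Finset.sum_ite_eq, Finset.mem_univ, ↓reduceIte]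
  rw [Fin.sum_ite_eq_add_one (fun z => Hm (z + j) a b)]
  have := i.isLt
  split_ifs <;> first | rfl | omega

theorem hankelMat_mul_shiftMat_conjTranspose {r s : ℕ} (h : s ≤ r + 1) (i : Fin r) (j : Fin s)
    (a b : Fin p) :
    (hankelMat p Hm r * (shiftMat p s r)ᴴ) (i, a) (j, b) =
      if (j : ℕ) = 0 then 0 else Hm (i + (j - 1)) a b := by
  simp only [hankelMat, shiftMat, ite_and, mul_apply, of_apply, conjTranspose_apply, apply_ite star,
    star_one, star_zero, mul_ite, mul_one, mul_zero, Fintype.sum_prod_type, Finset.sum_ite_eq,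
    Finset.mem_univ, ↓reduceIte]
  rw [Fin.sum_ite_eq_add_one (fun z => Hm (i + z) a b)]
  have := j.isLt
  split_ifs <;> first | rfl | omega

theorem smul_PiMat_mul_J_mul_conjTranspose {r s : ℕ} (hrs : r ≤ s + 1) (hsr : s ≤ r + 1)
    (hHm : ∀ k, k + 2 ≤ s → (Hm k)ᴴ = Hm k) :
    Complex.I • (PiMat p Hm r * 𝕁 * (PiMat p Hm s)ᴴ) =
      shiftMat p r s * hankelMat p Hm s - hankelMat p Hm r * (shiftMat p s r)ᴴ := by
  rw [PiMat, PiMat, fromCols_mul_fromBlocks_mul_conjTranspose_fromCols]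
  ext ⟨i, a⟩ ⟨j, b⟩
  rw [Matrix.sub_apply, shiftMat_mul_hankelMat hrs, hankelMat_mul_shiftMat_conjTranspose hsr]
  simp only [mul_ite, mul_zero, neg_mul, ite_and, Matrix.smul_apply, Matrix.add_apply, mul_apply,
    of_apply, conjTranspose_apply, apply_ite star, star_one, star_zero, mul_one,
    Finset.sum_ite_irrel, Finset.sum_ite_eq, Finset.mem_univ, ↓reduceIte, Finset.sum_const_zero,
    star_neg, star_mul', Complex.star_def, Complex.conj_I, neg_neg, ite_mul, one_mul, zero_mul,
    smul_eq_mul]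
  split_ifs with hj hi hi
  · simp
  · rw [hj, add_zero, add_zero, mul_neg, ← mul_assoc, Complex.I_mul_I]
    ring
  · have hHm_ab : starRingEnd ℂ (Hm (j - 1) b a) = Hm (j - 1) a b := by
      rw [← Complex.star_def, ← conjTranspose_apply, hHm _ (by omega)]
    rw [hi, hHm_ab, zero_add, ← mul_assoc, Complex.I_mul_I, zero_add, neg_one_mul, zero_sub]
  · rw [show (i : ℕ) - 1 + j = i + (j - 1) by omega]
    simp

theorem shiftMat_mul_conjTranspose_P2mat_of_le {r s : ℕ} (hs : 1 ≤ s) (h : r ≤ s) :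
    shiftMat p r s * (P2mat p s)ᴴ = 0 := by
  ext ⟨i, a⟩ b
  have := i.isLt
  rw [mul_conjTranspose_P2mat_apply hs]
  simp only [shiftMat, of_apply, Matrix.zero_apply, ite_eq_right_iff, one_ne_zero, imp_false,
    not_and]
  omega

theorem shiftMat_mul_conjTranspose_P2mat_succ {s : ℕ} (hs : 1 ≤ s) :
    shiftMat p (s + 1) s * (P2mat p s)ᴴ = (P2mat p (s + 1))ᴴ := by
  ext ⟨i, a⟩ b
  rw [mul_conjTranspose_P2mat_apply hs]
  simp [shiftMat, P2mat, Nat.sub_add_cancel hs, and_comm, eq_comm]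

theorem P2mat_mul_conjTranspose_shiftMat_of_le {r s : ℕ} (hr : 1 ≤ r) (h : s ≤ r) :
    P2mat p r * (shiftMat p s r)ᴴ = 0 := by
  rw [← conjTranspose_conjTranspose (P2mat p r), ← conjTranspose_mul,
    shiftMat_mul_conjTranspose_P2mat_of_le hr h, conjTranspose_zero]

theorem smul_omegaMat_mul_J_mul_conjTranspose {k l : ℕ} (hkl : k ≤ l + 1) (hlk : l ≤ k + 1)
    (hHm : ∀ j ≤ 2 * l, (Hm j)ᴴ = Hm j) (hk : IsUnit (hankelMat p Hm (k + 1)).det)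
    (hl : IsUnit (hankelMat p Hm (l + 1)).det) :
    Complex.I • (omegaMat p Hm k * 𝕁 * (omegaMat p Hm l)ᴴ) =
      P2mat p (k + 1) * (hankelMat p Hm (k + 1))⁻¹ * shiftMat p (k + 1) (l + 1) *
          (P2mat p (l + 1))ᴴ -
        P2mat p (k + 1) * (shiftMat p (l + 1) (k + 1))ᴴ * (hankelMat p Hm (l + 1))⁻¹ *
          (P2mat p (l + 1))ᴴ := by
  have hHl : ((hankelMat p Hm (l + 1))⁻¹)ᴴ = (hankelMat p Hm (l + 1))⁻¹ := by
    rw [conjTranspose_nonsing_inv, (hankelMat_isHermitian fun j hj => hHm j (by omega)).eq]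
  calc _ = P2mat p (k + 1) * (hankelMat p Hm (k + 1))⁻¹ *
          (Complex.I • (PiMat p Hm (k + 1) * 𝕁 * (PiMat p Hm (l + 1))ᴴ)) *
          (hankelMat p Hm (l + 1))⁻¹ * (P2mat p (l + 1))ᴴ := by
        simp only [omegaMat, conjTranspose_mul, hHl, Matrix.mul_smul, Matrix.smul_mul,
          Matrix.mul_assoc]
    _ = P2mat p (k + 1) * (hankelMat p Hm (k + 1))⁻¹ *
          (shiftMat p (k + 1) (l + 1) * hankelMat p Hm (l + 1) -
            hankelMat p Hm (k + 1) * (shiftMat p (l + 1) (k + 1))ᴴ) *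
          (hankelMat p Hm (l + 1))⁻¹ * (P2mat p (l + 1))ᴴ := by
        rw [smul_PiMat_mul_J_mul_conjTranspose (by omega) (by omega) fun j hj => hHm j (by omega)]
    _ = _ := by
        simp only [Matrix.mul_sub, Matrix.sub_mul, Matrix.mul_assoc, mul_nonsing_inv _ hl,
          nonsing_inv_mul_cancel_left _ _ hk, Matrix.mul_one]

theorem omegaMat_mul_J_mul_conjTranspose_self {k : ℕ} (hHm : ∀ j ≤ 2 * k, (Hm j)ᴴ = Hm j)
    (hk : IsUnit (hankelMat p Hm (k + 1)).det) :
    omegaMat p Hm k * 𝕁 * (omegaMat p Hm k)ᴴ = 0 := by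
  have h := smul_omegaMat_mul_J_mul_conjTranspose le_self_add le_self_add hHm hk hk
  rw [Matrix.mul_assoc _ (shiftMat _ _ _), shiftMat_mul_conjTranspose_P2mat_of_le le_add_self le_rfl,
    P2mat_mul_conjTranspose_shiftMat_of_le le_add_self le_rfl, Matrix.mul_zero, Matrix.zero_mul,
    Matrix.zero_mul, sub_zero, smul_eq_zero] at h
  exact h.resolve_left Complex.I_ne_zero

theorem smul_omegaMat_succ_mul_J_mul_conjTranspose {k : ℕ}
    (hHm : ∀ j ≤ 2 * k, (Hm j)ᴴ = Hm j) (hk₁ : IsUnit (hankelMat p Hm (k + 2)).det)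
    (hk : IsUnit (hankelMat p Hm (k + 1)).det) :
    Complex.I • (omegaMat p Hm (k + 1) * 𝕁 * (omegaMat p Hm k)ᴴ) = tMat p Hm (k + 2) := by
  rw [smul_omegaMat_mul_J_mul_conjTranspose (by omega) (by omega) hHm hk₁ hk,
    Matrix.mul_assoc _ (shiftMat _ _ _), shiftMat_mul_conjTranspose_P2mat_succ le_add_self,
    P2mat_mul_conjTranspose_shiftMat_of_le le_add_self (by omega), Matrix.zero_mul,
    Matrix.zero_mul, sub_zero, tMat]

theorem hankel_verblunsky_coefficients_general
    {p n : ℕ} (hn : 1 ≤ n)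
    (Hm : ℕ → Matrix (Fin p) (Fin p) ℂ)
    (hHm : ∀ k ≤ 2 * n - 2, (Hm k)ᴴ = Hm k)
    (hpos : (hankelMat p Hm n).PosDef) :
    (∀ r, 1 ≤ r → r ≤ n → (tMat p Hm r).PosDef) ∧
    (omegaMat p Hm 0 = Matrix.fromCols 0 (tMat p Hm 1)) ∧
    (∀ k ≤ n - 1,
      omegaMat p Hm k * (Matrix.fromBlocks 0 1 1 0 : Matrix (Fin p ⊕ Fin p) (Fin p ⊕ Fin p) ℂ) * (omegaMat p Hm k)ᴴ = 0) ∧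
    (∀ k, 1 ≤ k → k ≤ n - 1 →
      Complex.I • (omegaMat p Hm k * (Matrix.fromBlocks 0 1 1 0 : Matrix (Fin p ⊕ Fin p) (Fin p ⊕ Fin p) ℂ) *
        (omegaMat p Hm (k - 1))ᴴ) = tMat p Hm (k + 1)) := by
  have hunit : ∀ r ≤ n, IsUnit (hankelMat p Hm r).det := fun r hr =>
    (isUnit_iff_isUnit_det _).mp (hankelMat_posDef_of_le hr hpos).isUnit
  refine ⟨fun r hr hrn => tMat_posDef hr (hankelMat_posDef_of_le hrn hpos), omegaMat_zero,
    fun k hk => ?_, fun k hk hkn => ?_⟩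
  · exact omegaMat_mul_J_mul_conjTranspose_self (fun j hj => hHm j (by omega)) (hunit _ (by omega))
  · obtain ⟨k, rfl⟩ : ∃ k', k = k' + 1 := ⟨k - 1, by omega⟩
    exact smul_omegaMat_succ_mul_J_mul_conjTranspose (fun j hj => hHm j (by omega))
      (hunit _ (by omega)) (hunit _ (by omega))

/-- the properties of the Verblunsky-type coefficients of a positive
definite block Hankel matrix. -/
theorem hankel_verblunsky_coefficients
    {p n : ℕ} (hp : 1 ≤ p) (hn : 1 ≤ n)
    (Hm : ℕ → Matrix (Fin p) (Fin p) ℂ)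
    (hHm : ∀ k ≤ 2 * n - 2, (Hm k)ᴴ = Hm k)
    (hpos : (hankelMat p Hm n).PosDef) :
    (∀ r, 1 ≤ r → r ≤ n → (tMat p Hm r).PosDef) ∧
    (omegaMat p Hm 0 = Matrix.fromCols 0 (tMat p Hm 1)) ∧
    (∀ k ≤ n - 1,
      omegaMat p Hm k * (Matrix.fromBlocks 0 1 1 0 : Matrix (Fin p ⊕ Fin p) (Fin p ⊕ Fin p) ℂ) * (omegaMat p Hm k)ᴴ = 0) ∧
    (∀ k, 1 ≤ k → k ≤ n - 1 →
      Complex.I • (omegaMat p Hm k * (Matrix.fromBlocks 0 1 1 0 : Matrix (Fin p ⊕ Fin p) (Fin p ⊕ Fin p) ℂ) *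
        (omegaMat p Hm (k - 1))ᴴ) = tMat p Hm (k + 1)) :=
  hankel_verblunsky_coefficients_general hn Hm hHm hpos

end
end
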